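/- arXiv:2408.17229 — 12 statements merged into one kernel-verified Lean document; each statement's English description precedes it below -/
import Mathlib

section
/- For all positive integers a, b, c with a ≤ b ≤ c, every feasible strategy for (a,b,c)-Mastermind has at least c − 1 questions; that is, f(a,b,c) ≥ c − 1. -/
/-- A question (and a secret) for `(a,b,c)`-Mastermind is a triple in
`Fin a × Fin b × Fin c`. -/
abbrev Question (a b c : ℕ) := Fin a × Fin b × Fin c

/-- `g s q` is the number of coordinates in which `s` and `q` agree. -/
def g {a b c : ℕ} (s q : Question a b c) : ℕ :=
  (if s.1 = q.1 then 1 else 0) + (if s.2.1 = q.2.1 then 1 else 0) +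
    (if s.2.2 = q.2.2 then 1 else 0)

/-- A finite set of questions is a feasible strategy if every pair of distinct
secrets is distinguished by some question. -/
def Feasible {a b c : ℕ} (Q : Finset (Question a b c)) : Prop :=
  ∀ s s' : Question a b c, s ≠ s' → ∃ q ∈ Q, g s q ≠ g s' q

/-- `f a b c` is the minimum cardinality of a feasible strategy for
`(a,b,c)`-Mastermind. -/
noncomputable def f (a b c : ℕ) : ℕ :=
  sInf {n : ℕ | ∃ Q : Finset (Question a b c), Feasible Q ∧ Q.card = n}

theorem metric_dim_lower_bound_c_sub_one (a b c : ℕ) (ha : 0 < a) (hab : a ≤ b) (hbc : b ≤ c) :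
    (∀ Q : Finset (Question a b c), Feasible Q → c - 1 ≤ Q.card) ∧ c - 1 ≤ f a b c := by
  have hb : 0 < b := lt_of_lt_of_le ha hab
  have key : ∀ Q : Finset (Question a b c), Feasible Q → c - 1 ≤ Q.card := by
    intro Q hQ
    set T : Finset (Fin c) := Q.image (fun q => q.2.2) with hTdef
    have hT : c - 1 ≤ T.card := by
      by_contra h
      push_neg at h
      have hcc : Tᶜ.card = c - T.card := by
        rw [Finset.card_compl, Fintype.card_fin]
      have hTle : T.card ≤ c := by
        simpa using Finset.card_le_card (Finset.subset_univ T)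
      have hcompl : 1 < Tᶜ.card := by omega
      obtain ⟨z, hz, z', hz', hzz⟩ := Finset.one_lt_card.mp hcompl
      have hne : ((⟨0, ha⟩, ⟨0, hb⟩, z) : Question a b c) ≠ (⟨0, ha⟩, ⟨0, hb⟩, z') := by
        simp [Prod.ext_iff, hzz]
      obtain ⟨q, hq, hgq⟩ := hQ _ _ hne
      apply hgq
      have hmem : q.2.2 ∈ T := Finset.mem_image_of_mem _ hq
      have h1 : z ≠ q.2.2 := fun e => (Finset.mem_compl.mp hz) (e ▸ hmem)
      have h2 : z' ≠ q.2.2 := fun e => (Finset.mem_compl.mp hz') (e ▸ hmem)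
      simp [g, h1, h2]
    exact le_trans hT Finset.card_image_le
  refine ⟨key, ?_⟩
  have hfeas : Feasible (Finset.univ : Finset (Question a b c)) := by
    intro s s' hss
    refine ⟨s, Finset.mem_univ s, ?_⟩
    have h3 : g s s = 3 := by simp [g]
    have h3' : g s' s ≠ 3 := by
      intro h
      apply hss
      unfold g at h
      split_ifs at h with h1 h2 h3 <;> try omega
      exact Prod.ext h1.symm (Prod.ext h2.symm h3.symm)
    omega
  have hne : {n : ℕ | ∃ Q : Finset (Question a b c), Feasible Q ∧ Q.card = n}.Nonempty :=
    ⟨_, Finset.univ, hfeas, rfl⟩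
  obtain ⟨Q, hQ, hcard⟩ := Nat.sInf_mem hne
  rw [f, ← hcard]
  exact key Q hQ
end

section
/- For all positive integers a, b, c it holds that f(a,b,c+1) ≤ f(a,b,c) + 1, f(a,b+1,c) ≤ f(a,b,c) + 1, and f(a+1,b,c) ≤ f(a,b,c) + 1. -/
/-!
Embed an optimal strategy `Q` for `(a,b,c)` into `(a,b,c+1)`, leaving the new third symbol
`last` unasked, and add one question `q₀'`: some `q₀ ∈ Q` with its third symbol replaced by `last`.
The embedded `Q` still separates two secrets whose third symbols are both old or both `last`.
If only `s` has third symbol `last` and `q₀'` does not separate `s` from `s'`, then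
`g s q₀ + 1 = g s q₀' = g s' q₀' ≤ g s' q₀` (with `q₀` embedded), so `q₀` does.
`Q` is empty only for `a = b = c = 1`. The other two inequalities follow by permuting coordinates.
-/

open Finset

variable {a b c : ℕ}

lemma feasible_univ (a b c : ℕ) : Feasible (univ : Finset (Question a b c)) := by
  rintro ⟨x, y, z⟩ ⟨x', y', z'⟩ hne
  refine ⟨(x, y, z), mem_univ _, fun h => hne ?_⟩
  dsimp only [g] at h
  split_ifs at h <;> simp_all

lemma exists_feasible_card_eq_f (a b c : ℕ) :
    ∃ Q : Finset (Question a b c), Feasible Q ∧ Q.card = f a b c :=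
  Nat.sInf_mem (s := {n | ∃ Q : Finset (Question a b c), Feasible Q ∧ Q.card = n})
    ⟨_, univ, feasible_univ a b c, rfl⟩

lemma f_le_card {Q : Finset (Question a b c)} (hQ : Feasible Q) : f a b c ≤ Q.card :=
  Nat.sInf_le ⟨Q, hQ, rfl⟩

lemma Feasible.image_equiv {a' b' c' : ℕ} {Q : Finset (Question a b c)} (hQ : Feasible Q)
    (e : Question a b c ≃ Question a' b' c') (he : ∀ s q, g (e s) (e q) = g s q) :
    Feasible (Q.image e) := by
  intro s s' hne
  obtain ⟨q, hq, hgq⟩ := hQ (e.symm s) (e.symm s') (e.symm.injective.ne hne)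
  refine ⟨e q, mem_image_of_mem e hq, ?_⟩
  rwa [← e.apply_symm_apply s, ← e.apply_symm_apply s', he, he]

lemma f_le_of_equiv {a' b' c' : ℕ} (e : Question a b c ≃ Question a' b' c')
    (he : ∀ s q, g (e s) (e q) = g s q) : f a' b' c' ≤ f a b c := by
  obtain ⟨Q, hQ, hcard⟩ := exists_feasible_card_eq_f a b c
  calc f a' b' c' ≤ (Q.image e).card := f_le_card (hQ.image_equiv e he)
    _ ≤ Q.card := card_image_le
    _ = f a b c := hcard

lemma f_eq_of_equiv {a' b' c' : ℕ} (e : Question a b c ≃ Question a' b' c')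
    (he : ∀ s q, g (e s) (e q) = g s q) : f a' b' c' = f a b c := by
  refine le_antisymm (f_le_of_equiv e he) (f_le_of_equiv e.symm fun s q => ?_)
  rw [← he, e.apply_symm_apply, e.apply_symm_apply]

def Question.swap23 (a b c : ℕ) : Question a b c ≃ Question a c b where
  toFun s := (s.1, s.2.2, s.2.1)
  invFun s := (s.1, s.2.2, s.2.1)
  left_inv _ := rfl
  right_inv _ := rfl

def Question.swap13 (a b c : ℕ) : Question a b c ≃ Question c b a where
  toFun s := (s.2.2, s.2.1, s.1)
  invFun s := (s.2.2, s.2.1, s.1)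
  left_inv _ := rfl
  right_inv _ := rfl

lemma f_swap23 (a b c : ℕ) : f a c b = f a b c :=
  f_eq_of_equiv (Question.swap23 a b c) fun s q => by
    simp only [Question.swap23, Equiv.coe_fn_mk, g]
    grind

lemma f_swap13 (a b c : ℕ) : f c b a = f a b c :=
  f_eq_of_equiv (Question.swap13 a b c) fun s q => by
    simp only [Question.swap13, Equiv.coe_fn_mk, g]
    grind

def Question.castSucc (q : Question a b c) : Question a b (c + 1) :=
  (q.1, q.2.1, q.2.2.castSucc)

def Question.toLast (q : Question a b c) : Question a b (c + 1) :=
  (q.1, q.2.1, Fin.last c)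

lemma g_castSucc_castSucc (x : Fin a) (y : Fin b) (u : Fin c) (q : Question a b c) :
    g (x, y, u.castSucc) q.castSucc = g (x, y, u) q := by
  dsimp only [g, Question.castSucc]
  simp

lemma g_last_castSucc_add (x : Fin a) (y : Fin b) (z : Fin c) (q : Question a b c) :
    g (x, y, Fin.last c) q.castSucc + (if z = q.2.2 then 1 else 0) = g (x, y, z) q := by
  dsimp only [g, Question.castSucc]
  simp [(Fin.castSucc_lt_last q.2.2).ne']

lemma g_last_toLast (x : Fin a) (y : Fin b) (q : Question a b c) :
    g (x, y, Fin.last c) q.toLast = g (x, y, Fin.last c) q.castSucc + 1 := by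
  dsimp only [g, Question.castSucc, Question.toLast]
  simp [(Fin.castSucc_lt_last q.2.2).ne']

lemma g_castSucc_toLast_le (x : Fin a) (y : Fin b) (u : Fin c) (q : Question a b c) :
    g (x, y, u.castSucc) q.toLast ≤ g (x, y, u.castSucc) q.castSucc := by
  dsimp only [g, Question.castSucc, Question.toLast]
  simp [(Fin.castSucc_lt_last u).ne]

theorem Feasible.insert_toLast {Q : Finset (Question a b c)} (hQ : Feasible Q)
    {q₀ : Question a b c} (hq₀ : q₀ ∈ Q) :
    Feasible (insert q₀.toLast (Q.image Question.castSucc)) := by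
  set Q' := insert q₀.toLast (Q.image Question.castSucc)
  have mem_Q' : ∀ q ∈ Q, q.castSucc ∈ Q' := fun q hq => mem_insert_of_mem (mem_image_of_mem _ hq)
  have mixed : ∀ (x x' : Fin a) (y y' : Fin b) (u' : Fin c),
      ∃ q ∈ Q', g (x, y, Fin.last c) q ≠ g (x', y', u'.castSucc) q := by
    intro x x' y y' u'
    by_cases h : g (x, y, Fin.last c) q₀.toLast = g (x', y', u'.castSucc) q₀.toLast
    · refine ⟨q₀.castSucc, mem_Q' q₀ hq₀, ne_of_lt ?_⟩
      have hs := g_last_toLast x y q₀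
      have hs' := g_castSucc_toLast_le x' y' u' q₀
      omega
    · exact ⟨q₀.toLast, mem_insert_self _ _, h⟩
  rintro ⟨x, y, w⟩ ⟨x', y', w'⟩ hne
  induction w using Fin.lastCases with
  | last =>
    induction w' using Fin.lastCases with
    | last =>
      obtain ⟨q, hq, hgq⟩ := hQ (x, y, q₀.2.2) (x', y', q₀.2.2) (by simpa using hne)
      refine ⟨q.castSucc, mem_Q' q hq, fun h => hgq ?_⟩
      rw [← g_last_castSucc_add x y q₀.2.2, ← g_last_castSucc_add x' y' q₀.2.2, h]
    | cast u' => exact mixed x x' y y' u'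
  | cast u =>
    induction w' using Fin.lastCases with
    | last =>
      obtain ⟨q, hq, h⟩ := mixed x' x y' y u
      exact ⟨q, hq, h.symm⟩
    | cast u' =>
      obtain ⟨q, hq, hgq⟩ := hQ (x, y, u) (x', y', u')
        fun h => hne (congrArg Question.castSucc h)
      refine ⟨q.castSucc, mem_Q' q hq, ?_⟩
      rwa [g_castSucc_castSucc, g_castSucc_castSucc]

lemma eq_one_of_feasible_empty (ha : 0 < a) (hb : 0 < b) (hc : 0 < c)
    (h : Feasible (∅ : Finset (Question a b c))) : a = 1 ∧ b = 1 ∧ c = 1 := by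
  have hsub : Subsingleton (Question a b c) :=
    ⟨fun s s' => by_contra fun hne => by simpa using h s s' hne⟩
  have hcard := Fintype.card_le_one_iff_subsingleton.2 hsub
  simp only [Fintype.card_prod, Fintype.card_fin] at hcard
  have hpos : 0 < a * (b * c) := by positivity
  have habc : a * (b * c) = 1 := by omega
  simpa only [mul_eq_one] using habc

lemma f_succ_third_le (ha : 0 < a) (hb : 0 < b) (hc : 0 < c) :
    f a b (c + 1) ≤ f a b c + 1 := by
  obtain ⟨Q, hQ, hcard⟩ := exists_feasible_card_eq_f a b c
  rcases Q.eq_empty_or_nonempty with rfl | ⟨q₀, hq₀⟩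
  · obtain ⟨rfl, rfl, rfl⟩ := eq_one_of_feasible_empty ha hb hc hQ
    have : Feasible ({(0, 0, 1)} : Finset (Question 1 1 2)) := by unfold Feasible; decide
    exact (f_le_card this).trans le_add_self
  · calc f a b (c + 1) ≤ (insert q₀.toLast (Q.image Question.castSucc)).card :=
          f_le_card (hQ.insert_toLast hq₀)
      _ ≤ (Q.image Question.castSucc).card + 1 := card_insert_le _ _
      _ ≤ Q.card + 1 := by gcongr; exact card_image_le
      _ = f a b c + 1 := by rw [hcard]

theorem f_increase_by_one (a b c : ℕ) (ha : 0 < a) (hb : 0 < b) (hc : 0 < c) :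
    f a b (c + 1) ≤ f a b c + 1 ∧ f a (b + 1) c ≤ f a b c + 1 ∧
      f (a + 1) b c ≤ f a b c + 1 := by
  refine ⟨f_succ_third_le ha hb hc, ?_, ?_⟩
  · rw [f_swap23 a c (b + 1), f_swap23 a c b]
    exact f_succ_third_le ha hc hb
  · rw [f_swap13 c b (a + 1), f_swap13 c b a]
    exact f_succ_third_le hc hb ha
end

section
/- Let a ≥ 2 and let Q be a feasible strategy for (a,b,c)-Mastermind, and let i, j be two distinct colors of the first peg (elements of Fin a). Suppose that for every color y of the second peg and every color z of the third peg there exists a question (q1,q2,q3) ∈ Q with q1 ∈ {i,j}, q2 ≠ y and q3 ≠ z. Then the projection strategy Q1(i,j) — obtained from Q by replacing each occurrence of j on the first peg with i and decreasing every first-peg color greater than j by 1, so that all questions become elements of Fin (a−1) × Fin b × Fin c — is a feasible strategy for (a−1,b,c)-Mastermind. -/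
/-- The value of the projection map on first-peg colors: replace `j` by `i`
and decrease every color greater than `j` by one. -/
def projVal {a : ℕ} (i j x : Fin a) : ℕ :=
  if x = j then (if j.val < i.val then i.val - 1 else i.val)
  else (if j.val < x.val then x.val - 1 else x.val)

/-- The projection map `Fin a → Fin (a-1)` replacing color `j` by color `i`
and decreasing every color greater than `j` by one. -/
def projColor {a : ℕ} (i j : Fin a) (hij : i ≠ j) (x : Fin a) : Fin (a - 1) :=
  ⟨projVal i j x, by
    have hi := i.isLt
    have hj := j.isLt
    have hx := x.isLt
    have hij' : i.val ≠ j.val := fun h => hij (Fin.ext h)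
    unfold projVal
    by_cases h1 : x = j
    · simp only [if_pos h1]
      split_ifs <;> omega
    · have hxj : x.val ≠ j.val := fun h => h1 (Fin.ext h)
      simp only [if_neg h1]
      split_ifs <;> omega⟩


/-- Section of the projection: the increasing injection avoiding `j`. -/
def secColor {a : ℕ} (j : Fin a) (u : Fin (a - 1)) : Fin a :=
  if u.val < j.val then ⟨u.val, by omega⟩ else ⟨u.val + 1, by have := u.isLt; omega⟩

lemma secColor_ne {a : ℕ} (j : Fin a) (u : Fin (a - 1)) : secColor j u ≠ j := by
  unfold secColor
  split_ifs with hlt <;> (intro hh; have := congrArg Fin.val hh; simp at this; omega)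

lemma projColor_secColor {a : ℕ} (i j : Fin a) (hij : i ≠ j) (u : Fin (a - 1)) :
    projColor i j hij (secColor j u) = u := by
  apply Fin.ext
  show projVal i j (secColor j u) = u.val
  unfold projVal
  rw [if_neg (secColor_ne j u)]
  unfold secColor
  split_ifs with h1 <;> simp_all <;> omega

lemma projColor_eq_iff {a : ℕ} (i j : Fin a) (hij : i ≠ j) {x y : Fin a}
    (hx : x ≠ j) (hy : y ≠ j) :
    projColor i j hij x = projColor i j hij y ↔ x = y := by
  constructor
  · intro hxy
    have hv : projVal i j x = projVal i j y := congrArg Fin.val hxy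
    unfold projVal at hv
    rw [if_neg hx, if_neg hy] at hv
    have hxv : x.val ≠ j.val := fun hh => hx (Fin.ext hh)
    have hyv : y.val ≠ j.val := fun hh => hy (Fin.ext hh)
    exact Fin.ext (by split_ifs at hv <;> omega)
  · rintro rfl; rfl

lemma projColor_j {a : ℕ} (i j : Fin a) (hij : i ≠ j) :
    projColor i j hij j = projColor i j hij i := by
  apply Fin.ext
  show projVal i j j = projVal i j i
  unfold projVal
  rw [if_pos rfl, if_neg hij]

/-- For `x ∉ {i, j}`, the projection of `x` equals the projection of `q`
iff `x = q`. -/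
lemma projColor_eq_iff' {a : ℕ} (i j : Fin a) (hij : i ≠ j) {x q : Fin a}
    (hxj : x ≠ j) (hxi : x ≠ i) :
    projColor i j hij x = projColor i j hij q ↔ x = q := by
  by_cases hq : q = j
  · rw [hq, projColor_j]
    constructor
    · intro hh; exact absurd ((projColor_eq_iff i j hij hxj hij).mp hh) hxi
    · intro hh; exact absurd hh hxj
  · exact projColor_eq_iff i j hij hxj hq

theorem projection_feasible {a b c : ℕ} (ha : 2 ≤ a) (hb : 0 < b) (hc : 0 < c)
    (Q : Finset (Question a b c)) (hQ : Feasible Q)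
    (i j : Fin a) (hij : i ≠ j)
    (h : ∀ (y : Fin b) (z : Fin c),
      ∃ q ∈ Q, (q.1 = i ∨ q.1 = j) ∧ q.2.1 ≠ y ∧ q.2.2 ≠ z) :
    Feasible (Q.image (fun q => ((projColor i j hij q.1, q.2.1, q.2.2) :
      Question (a - 1) b c))) := by
  intro t t' hne
  by_cases h1 : t.1 = t'.1
  · -- second/third coordinates differ
    have h2 : t.2 ≠ t'.2 := by
      intro hh; exact hne (Prod.ext h1 hh)
    obtain ⟨q, hqQ, hg⟩ := hQ (secColor j t.1, t.2) (secColor j t.1, t'.2)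
      (by intro hh; exact h2 (Prod.mk.inj hh).2)
    refine ⟨(projColor i j hij q.1, q.2.1, q.2.2),
      Finset.mem_image_of_mem _ hqQ, ?_⟩
    simp only [g] at hg ⊢
    rw [h1]
    split_ifs at hg ⊢ <;> omega
  · by_cases hi1 : t.1 = projColor i j hij i
    · obtain ⟨q, hqQ, hq1, hy, hz⟩ := h t'.2.1 t'.2.2
      refine ⟨(projColor i j hij q.1, q.2.1, q.2.2),
        Finset.mem_image_of_mem _ hqQ, ?_⟩
      have hpq : projColor i j hij q.1 = projColor i j hij i := by
        rcases hq1 with hq1 | hq1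
        · rw [hq1]
        · rw [hq1]; exact projColor_j i j hij
      have e1 : t.1 = projColor i j hij q.1 := by rw [hpq, hi1]
      have e2 : t'.1 ≠ projColor i j hij q.1 := by
        rw [hpq, ← hi1]; exact fun hh => h1 hh.symm
      simp only [g, if_pos e1, if_neg e2, if_neg (Ne.symm hy),
        if_neg (Ne.symm hz)]
      split_ifs <;> omega
    · by_cases hi2 : t'.1 = projColor i j hij i
      · obtain ⟨q, hqQ, hq1, hy, hz⟩ := h t.2.1 t.2.2
        refine ⟨(projColor i j hij q.1, q.2.1, q.2.2),
          Finset.mem_image_of_mem _ hqQ, ?_⟩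
        have hpq : projColor i j hij q.1 = projColor i j hij i := by
          rcases hq1 with hq1 | hq1
          · rw [hq1]
          · rw [hq1]; exact projColor_j i j hij
        have e1 : t'.1 = projColor i j hij q.1 := by rw [hpq, hi2]
        have e2 : t.1 ≠ projColor i j hij q.1 := by
          rw [hpq, ← hi2]; exact h1
        simp only [g, if_pos e1, if_neg e2, if_neg (Ne.symm hy),
          if_neg (Ne.symm hz)]
        split_ifs <;> omega
      · -- neither projects to the merged color
        have hs1 : secColor j t.1 ≠ secColor j t'.1 := by
          intro hh
          apply h1
          rw [← projColor_secColor i j hij t.1, ← projColor_secColor i j hij t'.1, hh]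
        obtain ⟨q, hqQ, hg⟩ := hQ (secColor j t.1, t.2) (secColor j t'.1, t'.2)
          (by intro hh; exact hs1 (Prod.mk.inj hh).1)
        refine ⟨(projColor i j hij q.1, q.2.1, q.2.2),
          Finset.mem_image_of_mem _ hqQ, ?_⟩
        have hni : secColor j t.1 ≠ i := by
          intro hh
          apply hi1
          rw [← projColor_secColor i j hij t.1, hh]
        have hni' : secColor j t'.1 ≠ i := by
          intro hh
          apply hi2
          rw [← projColor_secColor i j hij t'.1, hh]
        have e1 := projColor_eq_iff' i j hij (secColor_ne j t.1) hni (q := q.1)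
        rw [projColor_secColor] at e1
        have e2 := projColor_eq_iff' i j hij (secColor_ne j t'.1) hni' (q := q.1)
        rw [projColor_secColor] at e2
        simp only [g] at hg ⊢
        rw [if_congr e1 rfl rfl, if_congr e2 rfl rfl]
        exact hg
end

section
/- For every positive integer a it holds that f(a,a,2a) = 2a − 1. -/
section helpers
variable {a X Y Z X' Y' Z' : ℕ}

-- Case x ≠ x', y = y'
theorem mm_h2 (hX : X < a) (hX' : X' < a) (hZ : Z < 2*a) (hZ' : Z' < 2*a)
    (H1 : ∀ j, j < a →
      ((if X = j then 1 else 0) + (if Y = j then 1 else 0) + (if Z = j then 1 else 0) : ℕ) =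
      (if X' = j then 1 else 0) + (if Y' = j then 1 else 0) + (if Z' = j then 1 else 0))
    (H2 : ∀ j, j + 1 < a →
      ((if X = j then 1 else 0) + (if Y = j+1 then 1 else 0) + (if Z = j+a then 1 else 0) : ℕ) =
      (if X' = j then 1 else 0) + (if Y' = j+1 then 1 else 0) + (if Z' = j+a then 1 else 0))
    (hxx : X ≠ X') (hyy : Y = Y') : False := by
  have h1 : Z' = X := by have e := H1 X hX; split_ifs at e <;> omega
  have h2 : Z = X' := by have e := H1 X' hX'; split_ifs at e <;> omega
  by_cases hlt : X + 1 < a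
  · have e := H2 X hlt; split_ifs at e <;> omega
  · have hlt' : X' + 1 < a := by omega
    have e := H2 X' hlt'; split_ifs at e <;> omega

-- Case x = x', y ≠ y'
theorem mm_h3 (hY : Y < a) (hY' : Y' < a) (hZ : Z < 2*a) (hZ' : Z' < 2*a)
    (H1 : ∀ j, j < a →
      ((if X = j then 1 else 0) + (if Y = j then 1 else 0) + (if Z = j then 1 else 0) : ℕ) =
      (if X' = j then 1 else 0) + (if Y' = j then 1 else 0) + (if Z' = j then 1 else 0))
    (H2 : ∀ j, j + 1 < a →
      ((if X = j then 1 else 0) + (if Y = j+1 then 1 else 0) + (if Z = j+a then 1 else 0) : ℕ) =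
      (if X' = j then 1 else 0) + (if Y' = j+1 then 1 else 0) + (if Z' = j+a then 1 else 0))
    (hxx : X = X') (hyy : Y ≠ Y') : False := by
  have h1 : Z' = Y := by have e := H1 Y hY; split_ifs at e <;> omega
  have h2 : Z = Y' := by have e := H1 Y' hY'; split_ifs at e <;> omega
  have hy0 : Y = 0 := by
    by_contra hy
    have e := H2 (Y-1) (by omega); split_ifs at e <;> omega
  have hy'0 : Y' = 0 := by
    by_contra hy
    have e := H2 (Y'-1) (by omega); split_ifs at e <;> omega
  omega

-- Case x ≠ x', y ≠ y', y' ≠ x, y ≠ x'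
theorem mm_h4a (hX : X < a) (hY : Y < a)
    (H1 : ∀ j, j < a →
      ((if X = j then 1 else 0) + (if Y = j then 1 else 0) + (if Z = j then 1 else 0) : ℕ) =
      (if X' = j then 1 else 0) + (if Y' = j then 1 else 0) + (if Z' = j then 1 else 0))
    (hxx : X ≠ X') (hyy : Y ≠ Y') (h1 : Y' ≠ X) (h2 : Y ≠ X') : False := by
  have k1 : Z' = X ∧ Y ≠ X := by have e := H1 X hX; split_ifs at e <;> omega
  have e := H1 Y hY
  split_ifs at e <;> omega

-- Case x ≠ x', y ≠ y', y' = x, y ≠ x'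
theorem mm_h4b (hX : X < a) (hY : Y < a) (hX' : X' < a) (hY' : Y' < a)
    (hZ : Z < 2*a) (hZ' : Z' < 2*a)
    (H1 : ∀ j, j < a →
      ((if X = j then 1 else 0) + (if Y = j then 1 else 0) + (if Z = j then 1 else 0) : ℕ) =
      (if X' = j then 1 else 0) + (if Y' = j then 1 else 0) + (if Z' = j then 1 else 0))
    (H2 : ∀ j, j + 1 < a →
      ((if X = j then 1 else 0) + (if Y = j+1 then 1 else 0) + (if Z = j+a then 1 else 0) : ℕ) =
      (if X' = j then 1 else 0) + (if Y' = j+1 then 1 else 0) + (if Z' = j+a then 1 else 0))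
    (hxx : X ≠ X') (hyy : Y ≠ Y') (hc1 : Y' = X) (hc2 : Y ≠ X') : False := by
  have k1 : Z = X' := by have e := H1 X' hX'; split_ifs at e <;> omega
  have k2 : Z' = Y := by have e := H1 Y hY; split_ifs at e <;> omega
  have hx : X = a - 1 := by
    by_contra hx
    have e := H2 X (by omega); split_ifs at e <;> omega
  have k3 : Y = X' + 1 ∧ Y' ≠ X' + 1 := by
    have e := H2 X' (by omega); split_ifs at e <;> omega
  have e := H2 (a-2) (by omega)
  split_ifs at e <;> omega

-- Case x ≠ x', y' = x, y = x', x+1 < a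
theorem mm_h4d (hX : X < a) (hX' : X' < a) (hZ : Z < 2*a) (hZ' : Z' < 2*a)
    (H2 : ∀ j, j + 1 < a →
      ((if X = j then 1 else 0) + (if Y = j+1 then 1 else 0) + (if Z = j+a then 1 else 0) : ℕ) =
      (if X' = j then 1 else 0) + (if Y' = j+1 then 1 else 0) + (if Z' = j+a then 1 else 0))
    (hxx : X ≠ X') (hc1 : Y' = X) (hc2 : Y = X') (hlt : X + 1 < a) : False := by
  by_cases hd1 : X' = X + 1
  · have e := H2 X hlt; split_ifs at e <;> omega
  · have k1 : Z' = X + a := by have e := H2 X hlt; split_ifs at e <;> omega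
    by_cases hd2 : X = X' + 1
    · have e := H2 X' (by omega); split_ifs at e <;> omega
    · by_cases hd3 : X' = 0
      · have k2 : Z = X - 1 + a := by
          have e := H2 (X-1) (by omega); split_ifs at e <;> omega
        have e := H2 0 (by omega); split_ifs at e <;> omega
      · have e := H2 (X'-1) (by omega); split_ifs at e <;> omega

end helpers

/-- Key combinatorial lemma over naturals. -/
theorem mm_key (a X Y Z X' Y' Z' : ℕ) (hX : X < a) (hY : Y < a) (hZ : Z < 2*a)
    (hX' : X' < a) (hY' : Y' < a) (hZ' : Z' < 2*a)
    (H1 : ∀ j, j < a →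
      ((if X = j then 1 else 0) + (if Y = j then 1 else 0) + (if Z = j then 1 else 0) : ℕ) =
      (if X' = j then 1 else 0) + (if Y' = j then 1 else 0) + (if Z' = j then 1 else 0))
    (H2 : ∀ j, j + 1 < a →
      ((if X = j then 1 else 0) + (if Y = j+1 then 1 else 0) + (if Z = j+a then 1 else 0) : ℕ) =
      (if X' = j then 1 else 0) + (if Y' = j+1 then 1 else 0) + (if Z' = j+a then 1 else 0)) :
    X = X' ∧ Y = Y' ∧ Z = Z' := by
  have H1' := fun j hj => (H1 j hj).symm
  have H2' := fun j hj => (H2 j hj).symm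
  by_cases hxx : X = X'
  · by_cases hyy : Y = Y'
    · refine ⟨hxx, hyy, ?_⟩
      by_cases hZa : Z < a
      · have e := H1 Z hZa; split_ifs at e <;> omega
      · by_cases hZb : Z < 2*a - 1
        · have e := H2 (Z-a) (by omega); split_ifs at e <;> omega
        · by_cases hZ'a : Z' < a
          · have e := H1 Z' hZ'a; split_ifs at e <;> omega
          · by_cases hZ'b : Z' < 2*a - 1
            · have e := H2 (Z'-a) (by omega); split_ifs at e <;> omega
            · omega
    · exact absurd (mm_h3 hY hY' hZ hZ' H1 H2 hxx hyy) not_false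
  · by_cases hyy : Y = Y'
    · exact absurd (mm_h2 hX hX' hZ hZ' H1 H2 hxx hyy) not_false
    · by_cases hc1 : Y' = X
      · by_cases hc2 : Y = X'
        · by_cases hlt : X + 1 < a
          · exact absurd (mm_h4d hX hX' hZ hZ' H2 hxx hc1 hc2 hlt) not_false
          · exact absurd (mm_h4d hX' hX hZ' hZ H2' (Ne.symm hxx) hc2 hc1 (by omega))
              not_false
        · exact absurd (mm_h4b hX hY hX' hY' hZ hZ' H1 H2 hxx hyy hc1 hc2) not_false
      · by_cases hc2 : Y = X'
        · exact absurd (mm_h4b hX' hY' hX hY hZ' hZ H1' H2' (Ne.symm hxx) (Ne.symm hyy)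
            hc2 hc1) not_false
        · exact absurd (mm_h4a hX hY H1 hxx hyy hc1 hc2) not_false

/-- The strategy: questions `(j,j,j)` for `j < a` and `(j, j+1, j+a)` for `j < a-1`,
indexed by the third coordinate `k < 2a-1`. -/
def qfun (a : ℕ) (k : Fin (2*a-1)) : Question a a (2*a) :=
  if h : (k : ℕ) < a then (⟨k, h⟩, ⟨k, h⟩, ⟨k, by have := k.isLt; omega⟩)
  else (⟨(k : ℕ) - a, by have := k.isLt; omega⟩,
        ⟨(k : ℕ) - a + 1, by have := k.isLt; omega⟩,
        ⟨k, by have := k.isLt; omega⟩)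

lemma qfun_third (a : ℕ) (k : Fin (2*a-1)) : ((qfun a k).2.2 : ℕ) = (k : ℕ) := by
  unfold qfun; split <;> rfl

lemma qfun_inj (a : ℕ) : Function.Injective (qfun a) := by
  intro k k' h
  have := qfun_third a k
  rw [h, qfun_third] at this
  exact Fin.ext this.symm

lemma qfun_feasible (a : ℕ) (ha : 0 < a) :
    Feasible (Finset.image (qfun a) Finset.univ) := by
  intro s s' hne
  by_contra hcon
  push_neg at hcon
  apply hne
  have h : ∀ k : Fin (2*a-1), g s (qfun a k) = g s' (qfun a k) := fun k =>
    hcon _ (Finset.mem_image_of_mem _ (Finset.mem_univ k))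
  obtain ⟨x, y, z⟩ := s
  obtain ⟨x', y', z'⟩ := s'
  have H1 : ∀ j, j < a →
      ((if (x:ℕ) = j then 1 else 0) + (if (y:ℕ) = j then 1 else 0)
        + (if (z:ℕ) = j then 1 else 0) : ℕ) =
      (if (x':ℕ) = j then 1 else 0) + (if (y':ℕ) = j then 1 else 0)
        + (if (z':ℕ) = j then 1 else 0) := by
    intro j hj
    have hk := h ⟨j, by omega⟩
    rw [show qfun a ⟨j, by omega⟩ = (⟨j, hj⟩, ⟨j, hj⟩, ⟨j, by omega⟩) from dif_pos hj] at hk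
    simpa [g, Fin.ext_iff] using hk
  have H2 : ∀ j, j + 1 < a →
      ((if (x:ℕ) = j then 1 else 0) + (if (y:ℕ) = j+1 then 1 else 0)
        + (if (z:ℕ) = j+a then 1 else 0) : ℕ) =
      (if (x':ℕ) = j then 1 else 0) + (if (y':ℕ) = j+1 then 1 else 0)
        + (if (z':ℕ) = j+a then 1 else 0) := by
    intro j hj
    have hk := h ⟨j + a, by omega⟩
    rw [show qfun a ⟨j + a, by omega⟩ =
        (⟨j, by omega⟩, ⟨j + 1, hj⟩, ⟨j + a, by omega⟩) from by
      rw [qfun, dif_neg (show ¬ ((⟨j+a, by omega⟩ : Fin (2*a-1)) : ℕ) < a by show ¬ (j+a) < a; omega)]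
      simp] at hk
    simpa [g, Fin.ext_iff] using hk
  obtain ⟨e1, e2, e3⟩ := mm_key a x y z x' y' z' x.isLt y.isLt z.isLt x'.isLt y'.isLt z'.isLt H1 H2
  simp [Prod.ext_iff, Fin.ext_iff, e1, e2, e3]

theorem f_a_a_two_a (a : ℕ) (ha : 0 < a) : f a a (2 * a) = 2 * a - 1 := by
  have hmem : 2*a - 1 ∈ {n : ℕ | ∃ Q : Finset (Question a a (2*a)), Feasible Q ∧ Q.card = n} := by
    refine ⟨Finset.image (qfun a) Finset.univ, qfun_feasible a ha, ?_⟩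
    rw [Finset.card_image_of_injective _ (qfun_inj a), Finset.card_univ, Fintype.card_fin]
  refine le_antisymm (Nat.sInf_le hmem) (le_csInf ⟨_, hmem⟩ ?_)
  rintro n ⟨Q, hQ, rfl⟩
  by_contra hlt
  push_neg at hlt
  -- the image of third coordinates misses at least two values
  set I : Finset (Fin (2*a)) := Q.image (fun q => q.2.2) with hI
  have hIcard : I.card < 2*a - 1 := lt_of_le_of_lt (Finset.card_image_le) hlt
  have hcompl : 1 < (Finset.univ \ I).card := by
    have := Finset.card_sdiff_add_card_eq_card (Finset.subset_univ I)
    rw [Finset.card_univ, Fintype.card_fin] at this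
    omega
  obtain ⟨z, hz, z', hz', hzz⟩ := Finset.one_lt_card.mp hcompl
  rw [Finset.mem_sdiff] at hz hz'
  obtain ⟨q, hqQ, hq⟩ := hQ (⟨0, ha⟩, ⟨0, ha⟩, z) (⟨0, ha⟩, ⟨0, ha⟩, z') (by simp [hzz])
  apply hq
  have h1 : z ≠ q.2.2 := fun h => hz.2 (h ▸ Finset.mem_image_of_mem _ hqQ)
  have h2 : z' ≠ q.2.2 := fun h => hz'.2 (h ▸ Finset.mem_image_of_mem _ hqQ)
  simp [g, h1, h2]
end

section
/- For all positive integers a, b, c with a ≤ b ≤ c, 3a < b + c and 2b ≤ c, it holds that f(a,b,c) = c − 1. -/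
/-- indicator -/
def ind (x u : ℕ) : ℕ := if x = u then 1 else 0

lemma ind_self (x : ℕ) : ind x x = 1 := if_pos rfl
lemma ind_of_eq {x u : ℕ} (h : x = u) : ind x u = 1 := if_pos h
lemma ind_of_ne {x u : ℕ} (h : x ≠ u) : ind x u = 0 := if_neg h
lemma ind_spec (x u : ℕ) : (ind x u = 1 ∧ x = u) ∨ (ind x u = 0 ∧ x ≠ u) := by
  by_cases h : x = u
  · exact Or.inl ⟨ind_of_eq h, h⟩
  · exact Or.inr ⟨ind_of_ne h, h⟩

/-- the j-th question -/
def qq (a b c : ℕ) (ha : 0 < a) (hb : 0 < b) (j : ℕ) (hj : j < c) : Question a b c :=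
  (⟨j % a, Nat.mod_lt j ha⟩, ⟨j / 2 % b, Nat.mod_lt (j / 2) hb⟩, ⟨j, hj⟩)

/-- the strategy -/
def myQ (a b c : ℕ) (ha : 0 < a) (hb : 0 < b) : Finset (Question a b c) :=
  Finset.univ.image (fun j : Fin (c - 1) =>
    qq a b c ha hb j.1 (lt_of_lt_of_le j.2 (Nat.sub_le c 1)))

lemma g_qq {a b c : ℕ} (ha : 0 < a) (hb : 0 < b) (s : Question a b c) (j : ℕ) (hj : j < c) :
    g s (qq a b c ha hb j hj)
      = ind s.1.1 (j % a) + ind s.2.1.1 (j / 2 % b) + ind s.2.2.1 j := by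
  simp [g, qq, ind, Fin.ext_iff]

lemma qq_mem {a b c : ℕ} (ha : 0 < a) (hb : 0 < b) (j : ℕ) (hj : j < c - 1) (hj' : j < c) :
    qq a b c ha hb j hj' ∈ myQ a b c ha hb := by
  exact Finset.mem_image.mpr ⟨⟨j, hj⟩, Finset.mem_univ _, rfl⟩

lemma myQ_card {a b c : ℕ} (ha : 0 < a) (hb : 0 < b) : (myQ a b c ha hb).card = c - 1 := by
  rw [myQ, Finset.card_image_of_injective _ ?_, Finset.card_univ, Fintype.card_fin]
  intro j k h
  have h3 := congrArg (fun q : Question a b c => (q.2.2 : ℕ)) h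
  simp only [qq] at h3
  exact Fin.ext h3

section cases
variable {a b c x1 y1 z1 x2 y2 z2 : ℕ}

lemma caseZ (hz1 : z1 < c - 1) (hx : x1 = x2) (hy : y1 = y2) (hz : z1 ≠ z2) :
    ∃ j, j < c - 1 ∧
      ind x1 (j % a) + ind y1 (j / 2 % b) + ind z1 j
        ≠ ind x2 (j % a) + ind y2 (j / 2 % b) + ind z2 j := by
  refine ⟨z1, hz1, ?_⟩
  rw [hx, hy, ind_self, ind_of_ne (Ne.symm hz)]
  rcases ind_spec x2 (z1 % a) with ⟨p, _⟩ | ⟨p, _⟩ <;>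
    rcases ind_spec y2 (z1 / 2 % b) with ⟨p2, _⟩ | ⟨p2, _⟩ <;>
    simp only [p, p2] <;> omega

lemma caseY (hy1 : y1 < b) (h2y1 : 2 * y1 + 1 < c - 1) (hx : x1 = x2) (hy : y1 ≠ y2) :
    ∃ j, j < c - 1 ∧
      ind x1 (j % a) + ind y1 (j / 2 % b) + ind z1 j
        ≠ ind x2 (j % a) + ind y2 (j / 2 % b) + ind z2 j := by
  by_cases hz : z2 = 2 * y1
  · refine ⟨2 * y1 + 1, by omega, ?_⟩
    have hV : (2 * y1 + 1) / 2 % b = y1 := by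
      rw [show (2 * y1 + 1) / 2 = y1 by omega]; exact Nat.mod_eq_of_lt hy1
    rw [hV, hx, ind_self, ind_of_ne (Ne.symm hy),
      ind_of_ne (show z2 ≠ 2 * y1 + 1 by omega)]
    rcases ind_spec x2 ((2 * y1 + 1) % a) with ⟨p, _⟩ | ⟨p, _⟩ <;>
      rcases ind_spec z1 (2 * y1 + 1) with ⟨p2, _⟩ | ⟨p2, _⟩ <;>
      simp only [p, p2] <;> omega
  · refine ⟨2 * y1, by omega, ?_⟩
    have hV : (2 * y1) / 2 % b = y1 := by
      rw [show (2 * y1) / 2 = y1 by omega]; exact Nat.mod_eq_of_lt hy1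
    rw [hV, hx, ind_self, ind_of_ne (Ne.symm hy), ind_of_ne hz]
    rcases ind_spec x2 ((2 * y1) % a) with ⟨p, _⟩ | ⟨p, _⟩ <;>
      rcases ind_spec z1 (2 * y1) with ⟨p2, _⟩ | ⟨p2, _⟩ <;>
      simp only [p, p2] <;> omega

lemma caseX (h2a : 2 * a ≤ c - 1) (hx1 : x1 < a) (hx : x1 ≠ x2) (hy : y1 = y2) :
    ∃ j, j < c - 1 ∧
      ind x1 (j % a) + ind y1 (j / 2 % b) + ind z1 j
        ≠ ind x2 (j % a) + ind y2 (j / 2 % b) + ind z2 j := by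
  have hUx : x1 % a = x1 := Nat.mod_eq_of_lt hx1
  have hUxa : (x1 + a) % a = x1 := by rw [Nat.add_mod_right]; exact hUx
  by_cases hz : z2 = x1
  · refine ⟨x1 + a, by omega, ?_⟩
    rw [hUxa, hy, ind_self, ind_of_ne (Ne.symm hx),
      ind_of_ne (show z2 ≠ x1 + a by omega)]
    rcases ind_spec y2 ((x1 + a) / 2 % b) with ⟨p, _⟩ | ⟨p, _⟩ <;>
      rcases ind_spec z1 (x1 + a) with ⟨p2, _⟩ | ⟨p2, _⟩ <;>
      simp only [p, p2] <;> omega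
  · refine ⟨x1, by omega, ?_⟩
    rw [hUx, hy, ind_self, ind_of_ne (Ne.symm hx), ind_of_ne hz]
    rcases ind_spec y2 (x1 / 2 % b) with ⟨p, _⟩ | ⟨p, _⟩ <;>
      rcases ind_spec z1 x1 with ⟨p2, _⟩ | ⟨p2, _⟩ <;>
      simp only [p, p2] <;> omega

lemma caseXY (ha2 : 2 ≤ a) (hab : a ≤ b) (h2a : 2 * a ≤ c - 1) (hx1 : x1 < a)
    (hy1 : y1 < b) (h2y1 : 2 * y1 + 1 < c - 1) (hx : x1 ≠ x2) (hy : y1 ≠ y2) :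
    ∃ j, j < c - 1 ∧
      ind x1 (j % a) + ind y1 (j / 2 % b) + ind z1 j
        ≠ ind x2 (j % a) + ind y2 (j / 2 % b) + ind z2 j := by
  by_contra hcon
  push_neg at hcon
  have hUx : x1 % a = x1 := Nat.mod_eq_of_lt hx1
  have hUxa : (x1 + a) % a = x1 := by rw [Nat.add_mod_right]; exact hUx
  have hV0 : (2 * y1) / 2 % b = y1 := by
    rw [show (2 * y1) / 2 = y1 by omega]; exact Nat.mod_eq_of_lt hy1
  have hV1 : (2 * y1 + 1) / 2 % b = y1 := by
    rw [show (2 * y1 + 1) / 2 = y1 by omega]; exact Nat.mod_eq_of_lt hy1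
  have hVx : x1 / 2 % b = x1 / 2 := Nat.mod_eq_of_lt (by omega)
  have hVxa : (x1 + a) / 2 % b = (x1 + a) / 2 := Nat.mod_eq_of_lt (by omega)
  have hVne : x1 / 2 % b ≠ (x1 + a) / 2 % b := by rw [hVx, hVxa]; omega
  have hU01 : (2 * y1) % a ≠ (2 * y1 + 1) % a := by
    intro heq
    have hdvd : a ∣ (2 * y1 + 1) - (2 * y1) := (Nat.modEq_iff_dvd' (by omega)).mp heq
    have h1 : a ∣ 1 := by simpa using hdvd
    have := Nat.le_of_dvd one_pos h1
    omega
  have E0 := hcon (2 * y1) (by omega)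
  have E1 := hcon (2 * y1 + 1) (by omega)
  rw [hV0, ind_self, ind_of_ne (Ne.symm hy)] at E0
  rw [hV1, ind_self, ind_of_ne (Ne.symm hy)] at E1
  -- z2 must be one of 2*y1, 2*y1+1
  have hz2mem : z2 = 2 * y1 ∨ z2 = 2 * y1 + 1 := by
    by_contra hK
    push_neg at hK
    rw [ind_of_ne hK.1] at E0
    rw [ind_of_ne hK.2] at E1
    rcases ind_spec x1 ((2 * y1) % a) with ⟨p1, q1⟩ | ⟨p1, q1⟩ <;>
      rcases ind_spec x2 ((2 * y1) % a) with ⟨p2, q2⟩ | ⟨p2, q2⟩ <;>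
      rcases ind_spec z1 (2 * y1) with ⟨p3, q3⟩ | ⟨p3, q3⟩ <;>
      rcases ind_spec x1 ((2 * y1 + 1) % a) with ⟨p4, q4⟩ | ⟨p4, q4⟩ <;>
      rcases ind_spec x2 ((2 * y1 + 1) % a) with ⟨p5, q5⟩ | ⟨p5, q5⟩ <;>
      rcases ind_spec z1 (2 * y1 + 1) with ⟨p6, q6⟩ | ⟨p6, q6⟩ <;>
      simp only [p1, p2, p3, p4, p5, p6] at E0 E1 <;> omega
  have hz2x1 : z2 ≠ x1 := by
    intro he
    rcases hz2mem with h2 | h2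
    · have hUeq : (2 * y1) % a = x1 := by rw [show 2 * y1 = x1 by omega]; exact hUx
      rw [hUeq, ind_self, ind_of_ne (Ne.symm hx), ind_of_eq h2] at E0
      rcases ind_spec z1 (2 * y1) with ⟨p, _⟩ | ⟨p, _⟩ <;> rw [p] at E0 <;> omega
    · have hUeq : (2 * y1 + 1) % a = x1 := by rw [show 2 * y1 + 1 = x1 by omega]; exact hUx
      rw [hUeq, ind_self, ind_of_ne (Ne.symm hx), ind_of_eq h2] at E1
      rcases ind_spec z1 (2 * y1 + 1) with ⟨p, _⟩ | ⟨p, _⟩ <;> rw [p] at E1 <;> omega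
  have hz2x1a : z2 ≠ x1 + a := by
    intro he
    rcases hz2mem with h2 | h2
    · have hUeq : (2 * y1) % a = x1 := by rw [show 2 * y1 = x1 + a by omega]; exact hUxa
      rw [hUeq, ind_self, ind_of_ne (Ne.symm hx), ind_of_eq h2] at E0
      rcases ind_spec z1 (2 * y1) with ⟨p, _⟩ | ⟨p, _⟩ <;> rw [p] at E0 <;> omega
    · have hUeq : (2 * y1 + 1) % a = x1 := by rw [show 2 * y1 + 1 = x1 + a by omega]; exact hUxa
      rw [hUeq, ind_self, ind_of_ne (Ne.symm hx), ind_of_eq h2] at E1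
      rcases ind_spec z1 (2 * y1 + 1) with ⟨p, _⟩ | ⟨p, _⟩ <;> rw [p] at E1 <;> omega
  have Ex := hcon x1 (by omega)
  have Exa := hcon (x1 + a) (by omega)
  rw [hUx, ind_self, ind_of_ne (Ne.symm hx), ind_of_ne hz2x1] at Ex
  rw [hUxa, ind_self, ind_of_ne (Ne.symm hx), ind_of_ne hz2x1a] at Exa
  rcases ind_spec y1 (x1 / 2 % b) with ⟨p1, q1⟩ | ⟨p1, q1⟩ <;>
    rcases ind_spec y2 (x1 / 2 % b) with ⟨p2, q2⟩ | ⟨p2, q2⟩ <;>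
    rcases ind_spec z1 x1 with ⟨p3, q3⟩ | ⟨p3, q3⟩ <;>
    rcases ind_spec y1 ((x1 + a) / 2 % b) with ⟨p4, q4⟩ | ⟨p4, q4⟩ <;>
    rcases ind_spec y2 ((x1 + a) / 2 % b) with ⟨p5, q5⟩ | ⟨p5, q5⟩ <;>
    rcases ind_spec z1 (x1 + a) with ⟨p6, q6⟩ | ⟨p6, q6⟩ <;>
    simp only [p1, p2, p3, p4, p5, p6] at Ex Exa <;> omega

end cases

lemma myQ_feasible {a b c : ℕ} (ha : 0 < a) (hb : 0 < b) (hab : a ≤ b) (hbc : b ≤ c)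
    (h3a : 3 * a < b + c) (h2b : 2 * b ≤ c) : Feasible (myQ a b c ha hb) := by
  intro s s' hne
  have hx1 := s.1.isLt
  have hx2 := s'.1.isLt
  have hy1 := s.2.1.isLt
  have hy2 := s'.2.1.isLt
  have hz1 := s.2.2.isLt
  have hz2 := s'.2.2.isLt
  have h2a : 2 * a ≤ c - 1 := by omega
  have use : ∀ j, j < c - 1 →
      (ind (s.1 : ℕ) (j % a) + ind (s.2.1 : ℕ) (j / 2 % b) + ind (s.2.2 : ℕ) j
        ≠ ind (s'.1 : ℕ) (j % a) + ind (s'.2.1 : ℕ) (j / 2 % b) + ind (s'.2.2 : ℕ) j) →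
      ∃ q ∈ myQ a b c ha hb, g s q ≠ g s' q := by
    intro j hj hne2
    refine ⟨qq a b c ha hb j (by omega), qq_mem ha hb j hj _, ?_⟩
    rw [g_qq, g_qq]
    exact hne2
  by_cases hxx : (s.1 : ℕ) = s'.1
  · by_cases hyy : (s.2.1 : ℕ) = s'.2.1
    · have hzz : (s.2.2 : ℕ) ≠ s'.2.2 := by
        intro h3
        exact hne (Prod.ext (Fin.ext hxx) (Prod.ext (Fin.ext hyy) (Fin.ext h3)))
      by_cases h1 : (s.2.2 : ℕ) < c - 1
      · obtain ⟨j, hj, hD⟩ := caseZ (a := a) (b := b) h1 hxx hyy hzz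
        exact use j hj hD
      · obtain ⟨j, hj, hD⟩ := caseZ (a := a) (b := b) (show (s'.2.2:ℕ) < c - 1 by omega)
          hxx.symm hyy.symm hzz.symm
        exact use j hj (Ne.symm hD)
    · by_cases h1 : 2 * (s.2.1 : ℕ) + 1 < c - 1
      · obtain ⟨j, hj, hD⟩ := caseY (z1 := (s.2.2:ℕ)) (z2 := (s'.2.2:ℕ)) hy1 h1 hxx hyy
        exact use j hj hD
      · obtain ⟨j, hj, hD⟩ := caseY (z1 := (s'.2.2:ℕ)) (z2 := (s.2.2:ℕ)) hy2
          (show 2 * (s'.2.1:ℕ) + 1 < c - 1 by omega) hxx.symm (Ne.symm hyy)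
        exact use j hj (Ne.symm hD)
  · by_cases hyy : (s.2.1 : ℕ) = s'.2.1
    · obtain ⟨j, hj, hD⟩ := caseX (z1 := (s.2.2:ℕ)) (z2 := (s'.2.2:ℕ)) h2a hx1 hxx hyy
      exact use j hj hD
    · have ha2 : 2 ≤ a := by omega
      by_cases h1 : 2 * (s.2.1 : ℕ) + 1 < c - 1
      · obtain ⟨j, hj, hD⟩ := caseXY (z1 := (s.2.2:ℕ)) (z2 := (s'.2.2:ℕ)) ha2 hab h2a
          hx1 hy1 h1 hxx hyy
        exact use j hj hD
      · obtain ⟨j, hj, hD⟩ := caseXY (z1 := (s'.2.2:ℕ)) (z2 := (s.2.2:ℕ)) ha2 hab h2a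
          hx2 hy2 (show 2 * (s'.2.1:ℕ) + 1 < c - 1 by omega) (Ne.symm hxx) (Ne.symm hyy)
        exact use j hj (Ne.symm hD)

lemma lower_bound {a b c : ℕ} (ha : 0 < a) (hb : 0 < b) (Q : Finset (Question a b c))
    (hF : Feasible Q) : c - 1 ≤ Q.card := by
  by_contra h
  push_neg at h
  set T := Q.image (fun q : Question a b c => q.2.2) with hT
  have hTcard : T.card ≤ Q.card := Finset.card_image_le
  have h1 : 1 < Tᶜ.card := by
    have h2 := Finset.card_compl T
    rw [Fintype.card_fin] at h2
    have h3 : T.card ≤ c := by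
      have := Finset.card_le_univ T
      simpa using this
    omega
  obtain ⟨z, hz, z', hz', hzz⟩ := Finset.one_lt_card.mp h1
  have hzT : z ∉ T := Finset.mem_compl.mp hz
  have hzT' : z' ∉ T := Finset.mem_compl.mp hz'
  obtain ⟨q, hq, hgne⟩ := hF (⟨0, ha⟩, ⟨0, hb⟩, z) (⟨0, ha⟩, ⟨0, hb⟩, z')
    (by intro hh; exact hzz (congrArg (fun t : Question a b c => t.2.2) hh))
  apply hgne
  have e1 : z ≠ q.2.2 := fun he => hzT (hT ▸ Finset.mem_image.mpr ⟨q, hq, he.symm⟩)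
  have e2 : z' ≠ q.2.2 := fun he => hzT' (hT ▸ Finset.mem_image.mpr ⟨q, hq, he.symm⟩)
  show (if _ then _ else _) + (if _ then _ else _) + (if (z : Fin c) = q.2.2 then 1 else 0)
    = (if _ then _ else _) + (if _ then _ else _) + (if (z' : Fin c) = q.2.2 then 1 else 0)
  rw [if_neg e1, if_neg e2]

theorem f_3a_lt_and_2b_le_c (a b c : ℕ) (ha : 0 < a) (hab : a ≤ b) (hbc : b ≤ c)
    (h3a : 3 * a < b + c) (h2b : 2 * b ≤ c) :
    f a b c = c - 1 := by
  have hb : 0 < b := lt_of_lt_of_le ha hab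
  have hmem : c - 1 ∈ {n : ℕ | ∃ Q : Finset (Question a b c), Feasible Q ∧ Q.card = n} :=
    ⟨myQ a b c ha hb, myQ_feasible ha hb hab hbc h3a h2b, myQ_card ha hb⟩
  have hle : f a b c ≤ c - 1 := Nat.sInf_le hmem
  have hge : c - 1 ≤ f a b c := by
    obtain ⟨Q, hF, hcard⟩ := Nat.sInf_mem (⟨c - 1, hmem⟩ :
      {n : ℕ | ∃ Q : Finset (Question a b c), Feasible Q ∧ Q.card = n}.Nonempty)
    calc c - 1 ≤ Q.card := lower_bound ha hb Q hF
      _ = f a b c := hcard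
  omega
end

section
/- For all positive integers a, b, c with a ≤ b ≤ c and 2b > c, it holds that f(a,b,c) ≥ ⌊2(b+c−1)/3⌋. -/
/-- The main 2D counting lemma: a resolving set of the grid `Fin b × Fin c`
satisfies `2b + 2c ≤ 3n + 4`. -/
lemma twoD {b c : ℕ} (hb : 0 < b) (hc : 0 < c) (P : Finset (Fin b × Fin c))
    (hres : ∀ s s' : Fin b × Fin c, s ≠ s' → ∃ w ∈ P,
      ((if s.1 = w.1 then 1 else 0) + (if s.2 = w.2 then 1 else 0) : ℕ) ≠
      (if s'.1 = w.1 then 1 else 0) + (if s'.2 = w.2 then 1 else 0)) :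
    2 * b + 2 * c ≤ 3 * P.card + 4 := by
  classical
  set R : Finset (Fin b) := P.image Prod.fst with hRdef
  set C : Finset (Fin c) := P.image Prod.snd with hCdef
  set PR : Finset (Fin b × Fin c) :=
    P.filter (fun p => (P.filter (fun q => q.1 = p.1)).card = 1) with hPRdef
  set PC : Finset (Fin b × Fin c) :=
    P.filter (fun p => (P.filter (fun q => q.2 = p.2)).card = 1) with hPCdef
  -- row of a member of PR is a singleton
  have hPRmem : ∀ p ∈ PR, ∀ q ∈ P, q.1 = p.1 → q = p := by
    intro p hp q hq hq1
    obtain ⟨hpP, hcard⟩ := Finset.mem_filter.mp hp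
    obtain ⟨x, hx⟩ := Finset.card_eq_one.mp hcard
    have hpmem : p ∈ P.filter (fun r => r.1 = p.1) := Finset.mem_filter.mpr ⟨hpP, rfl⟩
    have hqmem : q ∈ P.filter (fun r => r.1 = p.1) := Finset.mem_filter.mpr ⟨hq, hq1⟩
    rw [hx, Finset.mem_singleton] at hpmem hqmem
    rw [hqmem, hpmem]
  have hPCmem : ∀ p ∈ PC, ∀ q ∈ P, q.2 = p.2 → q = p := by
    intro p hp q hq hq1
    obtain ⟨hpP, hcard⟩ := Finset.mem_filter.mp hp
    obtain ⟨x, hx⟩ := Finset.card_eq_one.mp hcard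
    have hpmem : p ∈ P.filter (fun r => r.2 = p.2) := Finset.mem_filter.mpr ⟨hpP, rfl⟩
    have hqmem : q ∈ P.filter (fun r => r.2 = p.2) := Finset.mem_filter.mpr ⟨hq, hq1⟩
    rw [hx, Finset.mem_singleton] at hpmem hqmem
    rw [hqmem, hpmem]
  -- at most one empty row
  have hRb : b ≤ R.card + 1 := by
    by_contra h
    push_neg at h
    have hcard : 1 < (Finset.univ \ R).card := by
      rw [Finset.card_sdiff_of_subset (Finset.subset_univ R), Finset.card_univ, Fintype.card_fin]
      omega
    obtain ⟨y, hy, y', hy', hne⟩ := Finset.one_lt_card.mp hcard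
    have hyR : y ∉ R := (Finset.mem_sdiff.mp hy).2
    have hy'R : y' ∉ R := (Finset.mem_sdiff.mp hy').2
    obtain ⟨w, hw, hgne⟩ := hres (y, ⟨0, hc⟩) (y', ⟨0, hc⟩)
      (fun h => hne (congrArg Prod.fst h))
    apply hgne
    have h1 : y ≠ w.1 := fun h => hyR (h ▸ Finset.mem_image_of_mem Prod.fst hw)
    have h2 : y' ≠ w.1 := fun h => hy'R (h ▸ Finset.mem_image_of_mem Prod.fst hw)
    simp [h1, h2]
  -- at most one empty column
  have hCc : c ≤ C.card + 1 := by
    by_contra h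
    push_neg at h
    have hcard : 1 < (Finset.univ \ C).card := by
      rw [Finset.card_sdiff_of_subset (Finset.subset_univ C), Finset.card_univ, Fintype.card_fin]
      omega
    obtain ⟨z, hz, z', hz', hne⟩ := Finset.one_lt_card.mp hcard
    have hzC : z ∉ C := (Finset.mem_sdiff.mp hz).2
    have hz'C : z' ∉ C := (Finset.mem_sdiff.mp hz').2
    obtain ⟨w, hw, hgne⟩ := hres (⟨0, hb⟩, z) (⟨0, hb⟩, z')
      (fun h => hne (congrArg Prod.snd h))
    apply hgne
    have h1 : z ≠ w.2 := fun h => hzC (h ▸ Finset.mem_image_of_mem Prod.snd hw)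
    have h2 : z' ≠ w.2 := fun h => hz'C (h ▸ Finset.mem_image_of_mem Prod.snd hw)
    simp [h1, h2]
  -- row counting: 2 * R.card ≤ n + PR.card
  have hsumP : P.card = ∑ y ∈ R, (P.filter (fun p => p.1 = y)).card :=
    Finset.card_eq_sum_card_fiberwise (fun p hp => Finset.mem_image_of_mem _ hp)
  have hsumPR : PR.card = ∑ y ∈ R, (PR.filter (fun p => p.1 = y)).card :=
    Finset.card_eq_sum_card_fiberwise
      (fun p hp => Finset.mem_image_of_mem _ (Finset.mem_of_mem_filter p hp))
  have hrow : ∀ y ∈ R, 2 ≤ (P.filter (fun p => p.1 = y)).card +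
      (PR.filter (fun p => p.1 = y)).card := by
    intro y hy
    obtain ⟨p, hp, rfl⟩ := Finset.mem_image.mp hy
    have hk1 : 1 ≤ (P.filter (fun q => q.1 = p.1)).card :=
      Finset.card_pos.mpr ⟨p, Finset.mem_filter.mpr ⟨hp, rfl⟩⟩
    by_cases h2 : 2 ≤ (P.filter (fun q => q.1 = p.1)).card
    · omega
    · have hk_eq : (P.filter (fun q => q.1 = p.1)).card = 1 := by omega
      have hsub : P.filter (fun q => q.1 = p.1) ⊆ PR.filter (fun q => q.1 = p.1) := by
        intro q hq
        obtain ⟨hqP, hq1⟩ := Finset.mem_filter.mp hq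
        refine Finset.mem_filter.mpr ⟨Finset.mem_filter.mpr ⟨hqP, ?_⟩, hq1⟩
        rw [hq1]
        exact hk_eq
      have := Finset.card_le_card hsub
      omega
  have hRcount : 2 * R.card ≤ P.card + PR.card := by
    have h1 : ∑ _y ∈ R, 2 ≤ ∑ y ∈ R, ((P.filter (fun p => p.1 = y)).card +
        (PR.filter (fun p => p.1 = y)).card) := Finset.sum_le_sum hrow
    rw [Finset.sum_add_distrib, Finset.sum_const, smul_eq_mul] at h1
    omega
  -- column counting: 2 * C.card ≤ n + PC.card
  have hsumP' : P.card = ∑ z ∈ C, (P.filter (fun p => p.2 = z)).card :=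
    Finset.card_eq_sum_card_fiberwise (fun p hp => Finset.mem_image_of_mem _ hp)
  have hsumPC : PC.card = ∑ z ∈ C, (PC.filter (fun p => p.2 = z)).card :=
    Finset.card_eq_sum_card_fiberwise
      (fun p hp => Finset.mem_image_of_mem _ (Finset.mem_of_mem_filter p hp))
  have hcol : ∀ z ∈ C, 2 ≤ (P.filter (fun p => p.2 = z)).card +
      (PC.filter (fun p => p.2 = z)).card := by
    intro z hz
    obtain ⟨p, hp, rfl⟩ := Finset.mem_image.mp hz
    have hk1 : 1 ≤ (P.filter (fun q => q.2 = p.2)).card :=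
      Finset.card_pos.mpr ⟨p, Finset.mem_filter.mpr ⟨hp, rfl⟩⟩
    by_cases h2 : 2 ≤ (P.filter (fun q => q.2 = p.2)).card
    · omega
    · have hk_eq : (P.filter (fun q => q.2 = p.2)).card = 1 := by omega
      have hsub : P.filter (fun q => q.2 = p.2) ⊆ PC.filter (fun q => q.2 = p.2) := by
        intro q hq
        obtain ⟨hqP, hq1⟩ := Finset.mem_filter.mp hq
        refine Finset.mem_filter.mpr ⟨Finset.mem_filter.mpr ⟨hqP, ?_⟩, hq1⟩
        rw [hq1]
        exact hk_eq
      have := Finset.card_le_card hsub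
      omega
  have hCcount : 2 * C.card ≤ P.card + PC.card := by
    have h1 : ∑ _z ∈ C, 2 ≤ ∑ z ∈ C, ((P.filter (fun p => p.2 = z)).card +
        (PC.filter (fun p => p.2 = z)).card) := Finset.sum_le_sum hcol
    rw [Finset.sum_add_distrib, Finset.sum_const, smul_eq_mul] at h1
    omega
  -- union/intersection bound
  have hunion : PR.card + PC.card ≤ P.card + (PR ∩ PC).card := by
    have h1 := Finset.card_union_add_card_inter PR PC
    have h2 : (PR ∪ PC).card ≤ P.card := Finset.card_le_card (by
      intro q hq
      rcases Finset.mem_union.mp hq with h | h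
      · exact Finset.mem_of_mem_filter q h
      · exact Finset.mem_of_mem_filter q h)
    omega
  -- at most one isolated question
  have hIso : (PR ∩ PC).card ≤ 1 := by
    by_contra h
    push_neg at h
    obtain ⟨p, hp, p', hp', hne⟩ := Finset.one_lt_card.mp h
    have hpPR := (Finset.mem_inter.mp hp).1
    have hpPC := (Finset.mem_inter.mp hp).2
    have hp'PR := (Finset.mem_inter.mp hp').1
    have hp'PC := (Finset.mem_inter.mp hp').2
    have hpP : p ∈ P := Finset.mem_of_mem_filter p hpPR
    have hp'P : p' ∈ P := Finset.mem_of_mem_filter p' hp'PR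
    have h11 : p.1 ≠ p'.1 := fun h => hne (hPRmem p' hp'PR p hpP h)
    have h22 : p.2 ≠ p'.2 := fun h => hne (hPCmem p' hp'PC p hpP h)
    obtain ⟨w, hw, hgne⟩ := hres (p.1, p'.2) (p'.1, p.2)
      (fun h => h11 (Prod.ext_iff.mp h).1)
    apply hgne
    have e1 : (p.1 = w.1) ↔ (w = p) :=
      ⟨fun h => hPRmem p hpPR w hw h.symm, fun h => (congrArg Prod.fst h).symm⟩
    have e2 : (p'.2 = w.2) ↔ (w = p') :=
      ⟨fun h => hPCmem p' hp'PC w hw h.symm, fun h => (congrArg Prod.snd h).symm⟩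
    have e3 : (p'.1 = w.1) ↔ (w = p') :=
      ⟨fun h => hPRmem p' hp'PR w hw h.symm, fun h => (congrArg Prod.fst h).symm⟩
    have e4 : (p.2 = w.2) ↔ (w = p) :=
      ⟨fun h => hPCmem p hpPC w hw h.symm, fun h => (congrArg Prod.snd h).symm⟩
    simp only [if_congr e1 rfl rfl, if_congr e2 rfl rfl, if_congr e3 rfl rfl,
      if_congr e4 rfl rfl]
    exact add_comm _ _
  -- no isolated question together with an empty row and an empty column
  have hD : (PR ∩ PC).card = 0 ∨ b ≤ R.card ∨ c ≤ C.card := by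
    by_contra h
    push_neg at h
    obtain ⟨hIne, hRlt, hClt⟩ := h
    obtain ⟨p, hp⟩ := Finset.card_pos.mp (Nat.pos_of_ne_zero hIne)
    have hpPR := (Finset.mem_inter.mp hp).1
    have hpPC := (Finset.mem_inter.mp hp).2
    have hpP : p ∈ P := Finset.mem_of_mem_filter p hpPR
    have hy : (Finset.univ \ R).Nonempty := by
      rw [← Finset.card_pos, Finset.card_sdiff_of_subset (Finset.subset_univ R),
        Finset.card_univ, Fintype.card_fin]
      omega
    obtain ⟨y', hy'⟩ := hy
    have hy'R : y' ∉ R := (Finset.mem_sdiff.mp hy').2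
    have hz : (Finset.univ \ C).Nonempty := by
      rw [← Finset.card_pos, Finset.card_sdiff_of_subset (Finset.subset_univ C),
        Finset.card_univ, Fintype.card_fin]
      omega
    obtain ⟨z, hzm⟩ := hz
    have hzC : z ∉ C := (Finset.mem_sdiff.mp hzm).2
    have hne1 : p.1 ≠ y' := fun h => hy'R (h ▸ Finset.mem_image_of_mem Prod.fst hpP)
    obtain ⟨w, hw, hgne⟩ := hres (p.1, z) (y', p.2)
      (fun h => hne1 (Prod.ext_iff.mp h).1)
    apply hgne
    have e1 : (p.1 = w.1) ↔ (w = p) :=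
      ⟨fun h => hPRmem p hpPR w hw h.symm, fun h => (congrArg Prod.fst h).symm⟩
    have e4 : (p.2 = w.2) ↔ (w = p) :=
      ⟨fun h => hPCmem p hpPC w hw h.symm, fun h => (congrArg Prod.snd h).symm⟩
    have hz2 : z ≠ w.2 := fun h => hzC (h ▸ Finset.mem_image_of_mem Prod.snd hw)
    have hy2 : y' ≠ w.1 := fun h => hy'R (h ▸ Finset.mem_image_of_mem Prod.fst hw)
    simp only [if_congr e1 rfl rfl, if_congr e4 rfl rfl, if_neg hz2, if_neg hy2]
    omega
  have hRub : R.card ≤ b := by simpa using Finset.card_le_univ R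
  have hCub : C.card ≤ c := by simpa using Finset.card_le_univ C
  omega

theorem f_lower_bound_2b_gt_c (a b c : ℕ) (ha : 0 < a) (hab : a ≤ b) (hbc : b ≤ c)
    (h2b : c < 2 * b) :
    2 * (b + c - 1) / 3 ≤ f a b c := by
  have hb : 0 < b := lt_of_lt_of_le ha hab
  have hc : 0 < c := lt_of_lt_of_le hb hbc
  unfold f
  apply le_csInf
  · refine ⟨(Finset.univ : Finset (Question a b c)).card, Finset.univ, ?_, rfl⟩
    intro s s' hne
    refine ⟨s', Finset.mem_univ s', ?_⟩
    intro hEq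
    apply hne
    by_cases h1 : s.1 = s'.1 <;> by_cases h2 : s.2.1 = s'.2.1 <;>
      by_cases h3 : s.2.2 = s'.2.2 <;>
      simp [g, h1, h2, h3, Prod.ext_iff] at hEq ⊢
  · rintro n ⟨Q, hQ, rfl⟩
    set P : Finset (Fin b × Fin c) := Q.image Prod.snd with hPdef
    have hres : ∀ s s' : Fin b × Fin c, s ≠ s' → ∃ w ∈ P,
        ((if s.1 = w.1 then 1 else 0) + (if s.2 = w.2 then 1 else 0) : ℕ) ≠
        (if s'.1 = w.1 then 1 else 0) + (if s'.2 = w.2 then 1 else 0) := by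
      intro s s' hne
      obtain ⟨q, hq, hgne⟩ := hQ (⟨0, ha⟩, s) (⟨0, ha⟩, s')
        (fun h => hne (congrArg Prod.snd h))
      refine ⟨q.2, Finset.mem_image_of_mem _ hq, ?_⟩
      intro h
      apply hgne
      have key : ∀ (A B C B' C' : ℕ), B + C = B' + C' → (A + B) + C = (A + B') + C' := by
        intro A B C B' C' h; omega
      exact key _ _ _ _ _ h
    have h2d := twoD hb hc P hres
    have hle : P.card ≤ Q.card := Finset.card_image_le
    omega
end

section
/- Let Q be a feasible strategy for (a,b,c)-Mastermind. Then the set of colors x ∈ Fin a that do not occur as the first coordinate of any question in Q has at most one element; analogously, at most one color of Fin b is absent from the second coordinates of Q, and at most one color of Fin c is absent from the third coordinates of Q. -/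
theorem at_most_one_missing_color (a b c : ℕ) (ha : 0 < a) (hb : 0 < b) (hc : 0 < c)
    (Q : Finset (Question a b c)) (hQ : Feasible Q) :
    (Finset.univ.filter (fun x : Fin a => ∀ q ∈ Q, q.1 ≠ x)).card ≤ 1 ∧
    (Finset.univ.filter (fun y : Fin b => ∀ q ∈ Q, q.2.1 ≠ y)).card ≤ 1 ∧
    (Finset.univ.filter (fun z : Fin c => ∀ q ∈ Q, q.2.2 ≠ z)).card ≤ 1 := by
  refine ⟨?_, ?_, ?_⟩
  · rw [Finset.card_le_one]
    intro x hx x' hx'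
    simp only [Finset.mem_filter, Finset.mem_univ, true_and] at hx hx'
    by_contra hne
    obtain ⟨q, hq, hg⟩ := hQ (x, ⟨0, hb⟩, ⟨0, hc⟩) (x', ⟨0, hb⟩, ⟨0, hc⟩)
      (by simp [Prod.ext_iff, hne])
    exact hg (by simp [g, (hx q hq).symm, (hx' q hq).symm])
  · rw [Finset.card_le_one]
    intro y hy y' hy'
    simp only [Finset.mem_filter, Finset.mem_univ, true_and] at hy hy'
    by_contra hne
    obtain ⟨q, hq, hg⟩ := hQ (⟨0, ha⟩, y, ⟨0, hc⟩) (⟨0, ha⟩, y', ⟨0, hc⟩)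
      (by simp [Prod.ext_iff, hne])
    exact hg (by simp [g, (hy q hq).symm, (hy' q hq).symm])
  · rw [Finset.card_le_one]
    intro z hz z' hz'
    simp only [Finset.mem_filter, Finset.mem_univ, true_and] at hz hz'
    by_contra hne
    obtain ⟨q, hq, hg⟩ := hQ (⟨0, ha⟩, ⟨0, hb⟩, z) (⟨0, ha⟩, ⟨0, hb⟩, z')
      (by simp [Prod.ext_iff, hne])
    exact hg (by simp [g, (hz q hq).symm, (hz' q hq).symm])
end

section
/- Let Q be a feasible strategy for (a,b,c)-Mastermind. Then Q contains at most one (1,1,⋆)-question, i.e., at most one question q ∈ Q such that q is the unique question of Q having its first coordinate and also the unique question of Q having its second coordinate. Analogously, Q contains at most one (1,⋆,1)-question and at most one (⋆,1,1)-question. -/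
/-- Number of questions of `Q` sharing the first coordinate of `q`. -/
def cnt1 {a b c : ℕ} (Q : Finset (Question a b c)) (q : Question a b c) : ℕ :=
  (Q.filter (fun q' => q'.1 = q.1)).card

/-- Number of questions of `Q` sharing the second coordinate of `q`. -/
def cnt2 {a b c : ℕ} (Q : Finset (Question a b c)) (q : Question a b c) : ℕ :=
  (Q.filter (fun q' => q'.2.1 = q.2.1)).card

/-- Number of questions of `Q` sharing the third coordinate of `q`. -/
def cnt3 {a b c : ℕ} (Q : Finset (Question a b c)) (q : Question a b c) : ℕ :=
  (Q.filter (fun q' => q'.2.2 = q.2.2)).card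

lemma uniq_of_filter_card_one {α : Type*} [DecidableEq α] {Q : Finset α}
    {p : α → Prop} [DecidablePred p] {q : α} (hq : q ∈ Q) (hpq : p q)
    (h : (Q.filter p).card = 1) : ∀ r ∈ Q, (p r ↔ r = q) := by
  obtain ⟨x, hx⟩ := Finset.card_eq_one.mp h
  have hqx : q = x := by
    have : q ∈ Q.filter p := Finset.mem_filter.mpr ⟨hq, hpq⟩
    rw [hx] at this; simpa using this
  intro r hr
  constructor
  · intro hpr
    have : r ∈ Q.filter p := Finset.mem_filter.mpr ⟨hr, hpr⟩
    rw [hx] at this; simp at this; rw [this, hqx]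
  · rintro rfl; exact hpq

theorem at_most_one_one_one_star_question (a b c : ℕ) (ha : 0 < a) (hb : 0 < b)
    (hc : 0 < c) (Q : Finset (Question a b c)) (hQ : Feasible Q) :
    (∀ q ∈ Q, ∀ q' ∈ Q, cnt1 Q q = 1 ∧ cnt2 Q q = 1 →
      cnt1 Q q' = 1 ∧ cnt2 Q q' = 1 → q = q') ∧
    (∀ q ∈ Q, ∀ q' ∈ Q, cnt1 Q q = 1 ∧ cnt3 Q q = 1 →
      cnt1 Q q' = 1 ∧ cnt3 Q q' = 1 → q = q') ∧
    (∀ q ∈ Q, ∀ q' ∈ Q, cnt2 Q q = 1 ∧ cnt3 Q q = 1 →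
      cnt2 Q q' = 1 ∧ cnt3 Q q' = 1 → q = q') := by
  refine ⟨?_, ?_, ?_⟩
  · intro q hq q' hq' ⟨h1, h2⟩ ⟨h1', h2'⟩
    by_contra hne
    simp only [cnt1, cnt2, cnt3] at h1 h2 h1' h2'
    have u1 := uniq_of_filter_card_one (p := fun r => r.1 = q.1) hq rfl h1
    have u2 := uniq_of_filter_card_one (p := fun r => r.2.1 = q.2.1) hq rfl h2
    have u1' := uniq_of_filter_card_one (p := fun r => r.1 = q'.1) hq' rfl h1'
    have u2' := uniq_of_filter_card_one (p := fun r => r.2.1 = q'.2.1) hq' rfl h2'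
    have hx1 : q.1 ≠ q'.1 := fun h => hne (((u1' q hq).mp h))
    obtain ⟨r, hr, hgr⟩ := hQ (q.1, q'.2.1, q.2.2) (q'.1, q.2.1, q.2.2)
      (by simp [Prod.ext_iff, hx1])
    apply hgr
    simp only [g]
    have e1 : (q.1 = r.1) = (r = q) := propext (eq_comm.trans (u1 r hr))
    have e1' : (q'.1 = r.1) = (r = q') := propext (eq_comm.trans (u1' r hr))
    have e2 : (q.2.1 = r.2.1) = (r = q) := propext (eq_comm.trans (u2 r hr))
    have e2' : (q'.2.1 = r.2.1) = (r = q') := propext (eq_comm.trans (u2' r hr))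
    simp only [e1, e1', e2, e2']
    ring
  · intro q hq q' hq' ⟨h1, h2⟩ ⟨h1', h2'⟩
    by_contra hne
    simp only [cnt1, cnt2, cnt3] at h1 h2 h1' h2'
    have u1 := uniq_of_filter_card_one (p := fun r => r.1 = q.1) hq rfl h1
    have u2 := uniq_of_filter_card_one (p := fun r => r.2.2 = q.2.2) hq rfl h2
    have u1' := uniq_of_filter_card_one (p := fun r => r.1 = q'.1) hq' rfl h1'
    have u2' := uniq_of_filter_card_one (p := fun r => r.2.2 = q'.2.2) hq' rfl h2'
    have hx1 : q.1 ≠ q'.1 := fun h => hne (((u1' q hq).mp h))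
    obtain ⟨r, hr, hgr⟩ := hQ (q.1, q.2.1, q'.2.2) (q'.1, q.2.1, q.2.2)
      (by simp [Prod.ext_iff, hx1])
    apply hgr
    simp only [g]
    have e1 : (q.1 = r.1) = (r = q) := propext (eq_comm.trans (u1 r hr))
    have e1' : (q'.1 = r.1) = (r = q') := propext (eq_comm.trans (u1' r hr))
    have e2 : (q.2.2 = r.2.2) = (r = q) := propext (eq_comm.trans (u2 r hr))
    have e2' : (q'.2.2 = r.2.2) = (r = q') := propext (eq_comm.trans (u2' r hr))
    simp only [e1, e1', e2, e2']
    ring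
  · intro q hq q' hq' ⟨h1, h2⟩ ⟨h1', h2'⟩
    by_contra hne
    simp only [cnt1, cnt2, cnt3] at h1 h2 h1' h2'
    have u1 := uniq_of_filter_card_one (p := fun r => r.2.1 = q.2.1) hq rfl h1
    have u2 := uniq_of_filter_card_one (p := fun r => r.2.2 = q.2.2) hq rfl h2
    have u1' := uniq_of_filter_card_one (p := fun r => r.2.1 = q'.2.1) hq' rfl h1'
    have u2' := uniq_of_filter_card_one (p := fun r => r.2.2 = q'.2.2) hq' rfl h2'
    have hx1 : q.2.1 ≠ q'.2.1 := fun h => hne (((u1' q hq).mp h))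
    obtain ⟨r, hr, hgr⟩ := hQ (q.1, q.2.1, q'.2.2) (q.1, q'.2.1, q.2.2)
      (by simp [Prod.ext_iff, hx1])
    apply hgr
    simp only [g]
    have e1 : (q.2.1 = r.2.1) = (r = q) := propext (eq_comm.trans (u1 r hr))
    have e1' : (q'.2.1 = r.2.1) = (r = q') := propext (eq_comm.trans (u1' r hr))
    have e2 : (q.2.2 = r.2.2) = (r = q) := propext (eq_comm.trans (u2 r hr))
    have e2' : (q'.2.2 = r.2.2) = (r = q') := propext (eq_comm.trans (u2' r hr))
    simp only [e1, e1', e2, e2']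
    ring
end

section
/- Let Q be a feasible strategy for (a,b,c)-Mastermind. If there exists a color of Fin a missing on the first peg and a color of Fin b missing on the second peg, then Q contains no (1,1,⋆)-question. Analogous statements hold for the pair consisting of the first and third peg (no (1,⋆,1)-question) and for the pair consisting of the second and third peg (no (⋆,1,1)-question). -/
lemma filter_card_one_unique {α : Type*} {Q : Finset α} {p : α → Prop}
    [DecidablePred p] {q : α} (h : (Q.filter p).card = 1) (hq : q ∈ Q)
    (hp : p q) : ∀ q' ∈ Q, p q' → q' = q := by
  obtain ⟨a, ha⟩ := Finset.card_eq_one.mp h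
  have hqa : q = a := by
    have := (Finset.mem_filter.mpr ⟨hq, hp⟩); rw [ha] at this
    exact Finset.mem_singleton.mp this
  intro q' hq' hp'
  have := (Finset.mem_filter.mpr ⟨hq', hp'⟩); rw [ha] at this
  rw [Finset.mem_singleton.mp this, hqa]

theorem missing_colors_forbid_singleton_question (a b c : ℕ) (ha : 0 < a)
    (hb : 0 < b) (hc : 0 < c) (Q : Finset (Question a b c)) (hQ : Feasible Q) :
    ((∃ x : Fin a, ∀ q ∈ Q, q.1 ≠ x) → (∃ y : Fin b, ∀ q ∈ Q, q.2.1 ≠ y) →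
      ¬∃ q ∈ Q, cnt1 Q q = 1 ∧ cnt2 Q q = 1) ∧
    ((∃ x : Fin a, ∀ q ∈ Q, q.1 ≠ x) → (∃ z : Fin c, ∀ q ∈ Q, q.2.2 ≠ z) →
      ¬∃ q ∈ Q, cnt1 Q q = 1 ∧ cnt3 Q q = 1) ∧
    ((∃ y : Fin b, ∀ q ∈ Q, q.2.1 ≠ y) → (∃ z : Fin c, ∀ q ∈ Q, q.2.2 ≠ z) →
      ¬∃ q ∈ Q, cnt2 Q q = 1 ∧ cnt3 Q q = 1) := by

  refine ⟨?_, ?_, ?_⟩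
  · rintro ⟨x, hx⟩ ⟨y, hy⟩ ⟨q, hqQ, h1, h2⟩
    have u1 := filter_card_one_unique (show (Q.filter (fun q' => q'.1 = q.1)).card = 1 from h1) hqQ rfl
    have u2 := filter_card_one_unique (show (Q.filter (fun q' => q'.2.1 = q.2.1)).card = 1 from h2) hqQ rfl
    have hne : (x, q.2.1, q.2.2) ≠ ((q.1, y, q.2.2) : Question a b c) := by
      intro h; exact hx q hqQ (congrArg Prod.fst h).symm
    obtain ⟨q', hq'Q, hg⟩ := hQ _ _ hne
    apply hg
    simp only [g]
    have e1 : ¬ x = q'.1 := fun h => hx q' hq'Q h.symm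
    have e2 : ¬ y = q'.2.1 := fun h => hy q' hq'Q h.symm
    have e3 : (if q.2.1 = q'.2.1 then 1 else 0) = (if q.1 = q'.1 then (1:ℕ) else 0) := by
      by_cases h : q' = q
      · subst h; simp
      · rw [if_neg, if_neg]
        · exact fun he => h (u1 q' hq'Q he.symm)
        · exact fun he => h (u2 q' hq'Q he.symm)
    simp only [if_neg e1, if_neg e2, e3]
    omega
  · rintro ⟨x, hx⟩ ⟨z, hz⟩ ⟨q, hqQ, h1, h3⟩
    have u1 := filter_card_one_unique (show (Q.filter (fun q' => q'.1 = q.1)).card = 1 from h1) hqQ rfl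
    have u3 := filter_card_one_unique (show (Q.filter (fun q' => q'.2.2 = q.2.2)).card = 1 from h3) hqQ rfl
    have hne : (x, q.2.1, q.2.2) ≠ ((q.1, q.2.1, z) : Question a b c) := by
      intro h; exact hx q hqQ (congrArg Prod.fst h).symm
    obtain ⟨q', hq'Q, hg⟩ := hQ _ _ hne
    apply hg
    simp only [g]
    have e1 : ¬ x = q'.1 := fun h => hx q' hq'Q h.symm
    have e2 : ¬ z = q'.2.2 := fun h => hz q' hq'Q h.symm
    have e3 : (if q.2.2 = q'.2.2 then 1 else 0) = (if q.1 = q'.1 then (1:ℕ) else 0) := by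
      by_cases h : q' = q
      · subst h; simp
      · rw [if_neg, if_neg]
        · exact fun he => h (u1 q' hq'Q he.symm)
        · exact fun he => h (u3 q' hq'Q he.symm)
    simp only [if_neg e1, if_neg e2, e3]
    omega
  · rintro ⟨y, hy⟩ ⟨z, hz⟩ ⟨q, hqQ, h2, h3⟩
    have u2 := filter_card_one_unique (show (Q.filter (fun q' => q'.2.1 = q.2.1)).card = 1 from h2) hqQ rfl
    have u3 := filter_card_one_unique (show (Q.filter (fun q' => q'.2.2 = q.2.2)).card = 1 from h3) hqQ rfl
    have hne : (q.1, y, q.2.2) ≠ ((q.1, q.2.1, z) : Question a b c) := by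
      intro h; exact hz q hqQ (congrArg (fun p => p.2.2) h)
    obtain ⟨q', hq'Q, hg⟩ := hQ _ _ hne
    apply hg
    simp only [g]
    have e1 : ¬ y = q'.2.1 := fun h => hy q' hq'Q h.symm
    have e2 : ¬ z = q'.2.2 := fun h => hz q' hq'Q h.symm
    have e3 : (if q.2.2 = q'.2.2 then 1 else 0) = (if q.2.1 = q'.2.1 then (1:ℕ) else 0) := by
      by_cases h : q' = q
      · subst h; simp
      · rw [if_neg, if_neg]
        · exact fun he => h (u2 q' hq'Q he.symm)
        · exact fun he => h (u3 q' hq'Q he.symm)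
    simp only [if_neg e1, if_neg e2, e3]
    omega
end

section
/- Let Q be a feasible strategy for (a,b,c)-Mastermind. If there exists a color of Fin a missing on the first peg and a color of Fin b missing on the second peg, then Q cannot contain both a (1,⋆,1)-question and a (⋆,1,1)-question. Analogous statements hold for missing colors on the first and third peg (then not both a (1,1,⋆)-question and a (⋆,1,1)-question) and for missing colors on the second and third peg (then not both a (1,1,⋆)-question and a (1,⋆,1)-question). -/
lemma key1 {a b c : ℕ} {Q : Finset (Question a b c)} {q : Question a b c}
    (hq : q ∈ Q) (h : cnt1 Q q = 1) : ∀ p ∈ Q, p.1 = q.1 → p = q := by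
  intro p hp hpq
  rw [cnt1, Finset.card_eq_one] at h
  obtain ⟨u, hu⟩ := h
  have hqm : q ∈ Q.filter (fun q' => q'.1 = q.1) := Finset.mem_filter.2 ⟨hq, rfl⟩
  have hpm : p ∈ Q.filter (fun q' => q'.1 = q.1) := Finset.mem_filter.2 ⟨hp, hpq⟩
  rw [hu, Finset.mem_singleton] at hqm hpm
  rw [hpm, hqm]

lemma key2 {a b c : ℕ} {Q : Finset (Question a b c)} {q : Question a b c}
    (hq : q ∈ Q) (h : cnt2 Q q = 1) : ∀ p ∈ Q, p.2.1 = q.2.1 → p = q := by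
  intro p hp hpq
  rw [cnt2, Finset.card_eq_one] at h
  obtain ⟨u, hu⟩ := h
  have hqm : q ∈ Q.filter (fun q' => q'.2.1 = q.2.1) := Finset.mem_filter.2 ⟨hq, rfl⟩
  have hpm : p ∈ Q.filter (fun q' => q'.2.1 = q.2.1) := Finset.mem_filter.2 ⟨hp, hpq⟩
  rw [hu, Finset.mem_singleton] at hqm hpm
  rw [hpm, hqm]

lemma key3 {a b c : ℕ} {Q : Finset (Question a b c)} {q : Question a b c}
    (hq : q ∈ Q) (h : cnt3 Q q = 1) : ∀ p ∈ Q, p.2.2 = q.2.2 → p = q := by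
  intro p hp hpq
  rw [cnt3, Finset.card_eq_one] at h
  obtain ⟨u, hu⟩ := h
  have hqm : q ∈ Q.filter (fun q' => q'.2.2 = q.2.2) := Finset.mem_filter.2 ⟨hq, rfl⟩
  have hpm : p ∈ Q.filter (fun q' => q'.2.2 = q.2.2) := Finset.mem_filter.2 ⟨hp, hpq⟩
  rw [hu, Finset.mem_singleton] at hqm hpm
  rw [hpm, hqm]

theorem missing_colors_forbid_two_singleton_questions (a b c : ℕ) (ha : 0 < a)
    (hb : 0 < b) (hc : 0 < c) (Q : Finset (Question a b c)) (hQ : Feasible Q) :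
    ((∃ x : Fin a, ∀ q ∈ Q, q.1 ≠ x) → (∃ y : Fin b, ∀ q ∈ Q, q.2.1 ≠ y) →
      ¬((∃ q ∈ Q, cnt1 Q q = 1 ∧ cnt3 Q q = 1) ∧
        (∃ q ∈ Q, cnt2 Q q = 1 ∧ cnt3 Q q = 1))) ∧
    ((∃ x : Fin a, ∀ q ∈ Q, q.1 ≠ x) → (∃ z : Fin c, ∀ q ∈ Q, q.2.2 ≠ z) →
      ¬((∃ q ∈ Q, cnt1 Q q = 1 ∧ cnt2 Q q = 1) ∧
        (∃ q ∈ Q, cnt2 Q q = 1 ∧ cnt3 Q q = 1))) ∧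
    ((∃ y : Fin b, ∀ q ∈ Q, q.2.1 ≠ y) → (∃ z : Fin c, ∀ q ∈ Q, q.2.2 ≠ z) →
      ¬((∃ q ∈ Q, cnt1 Q q = 1 ∧ cnt2 Q q = 1) ∧
        (∃ q ∈ Q, cnt1 Q q = 1 ∧ cnt3 Q q = 1))) := by
  refine ⟨?_, ?_, ?_⟩
  · rintro ⟨x, hx⟩ ⟨y, hy⟩ ⟨⟨q, hq, hq1, hq3⟩, ⟨r, hr, hr2, hr3⟩⟩
    have hne : ((q.1, y, r.2.2) : Question a b c) ≠ (x, r.2.1, q.2.2) := by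
      intro h
      exact hy r hr (congrArg (fun t : Question a b c => t.2.1) h).symm
    obtain ⟨p, hp, hgp⟩ := hQ _ _ hne
    apply hgp
    simp only [g]
    have A : ((if (q.1 : Fin a) = p.1 then 1 else 0) : ℕ) = if p = q then 1 else 0 := by
      by_cases h : p = q
      · simp [h]
      · have : ¬ (q.1 : Fin a) = p.1 := fun he => h (key1 hq hq1 p hp he.symm)
        simp [h, this]
    have B : ((if (y : Fin b) = p.2.1 then 1 else 0) : ℕ) = 0 := by
      have : ¬ (y : Fin b) = p.2.1 := fun he => hy p hp he.symm
      simp [this]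
    have C : ((if (r.2.2 : Fin c) = p.2.2 then 1 else 0) : ℕ) = if p = r then 1 else 0 := by
      by_cases h : p = r
      · simp [h]
      · have : ¬ (r.2.2 : Fin c) = p.2.2 := fun he => h (key3 hr hr3 p hp he.symm)
        simp [h, this]
    have A' : ((if (x : Fin a) = p.1 then 1 else 0) : ℕ) = 0 := by
      have : ¬ (x : Fin a) = p.1 := fun he => hx p hp he.symm
      simp [this]
    have B' : ((if (r.2.1 : Fin b) = p.2.1 then 1 else 0) : ℕ) = if p = r then 1 else 0 := by
      by_cases h : p = r
      · simp [h]
      · have : ¬ (r.2.1 : Fin b) = p.2.1 := fun he => h (key2 hr hr2 p hp he.symm)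
        simp [h, this]
    have C' : ((if (q.2.2 : Fin c) = p.2.2 then 1 else 0) : ℕ) = if p = q then 1 else 0 := by
      by_cases h : p = q
      · simp [h]
      · have : ¬ (q.2.2 : Fin c) = p.2.2 := fun he => h (key3 hq hq3 p hp he.symm)
        simp [h, this]
    simp only [A, B, C, A', B', C']
    ring
  · rintro ⟨x, hx⟩ ⟨z, hz⟩ ⟨⟨q, hq, hq1, hq2⟩, ⟨r, hr, hr2, hr3⟩⟩
    have hne : ((q.1, r.2.1, z) : Question a b c) ≠ (x, q.2.1, r.2.2) := by
      intro h
      exact hz r hr (congrArg (fun t : Question a b c => t.2.2) h).symm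
    obtain ⟨p, hp, hgp⟩ := hQ _ _ hne
    apply hgp
    simp only [g]
    have A : ((if (q.1 : Fin a) = p.1 then 1 else 0) : ℕ) = if p = q then 1 else 0 := by
      by_cases h : p = q
      · simp [h]
      · have : ¬ (q.1 : Fin a) = p.1 := fun he => h (key1 hq hq1 p hp he.symm)
        simp [h, this]
    have B : ((if (r.2.1 : Fin b) = p.2.1 then 1 else 0) : ℕ) = if p = r then 1 else 0 := by
      by_cases h : p = r
      · simp [h]
      · have : ¬ (r.2.1 : Fin b) = p.2.1 := fun he => h (key2 hr hr2 p hp he.symm)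
        simp [h, this]
    have C : ((if (z : Fin c) = p.2.2 then 1 else 0) : ℕ) = 0 := by
      have : ¬ (z : Fin c) = p.2.2 := fun he => hz p hp he.symm
      simp [this]
    have A' : ((if (x : Fin a) = p.1 then 1 else 0) : ℕ) = 0 := by
      have : ¬ (x : Fin a) = p.1 := fun he => hx p hp he.symm
      simp [this]
    have B' : ((if (q.2.1 : Fin b) = p.2.1 then 1 else 0) : ℕ) = if p = q then 1 else 0 := by
      by_cases h : p = q
      · simp [h]
      · have : ¬ (q.2.1 : Fin b) = p.2.1 := fun he => h (key2 hq hq2 p hp he.symm)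
        simp [h, this]
    have C' : ((if (r.2.2 : Fin c) = p.2.2 then 1 else 0) : ℕ) = if p = r then 1 else 0 := by
      by_cases h : p = r
      · simp [h]
      · have : ¬ (r.2.2 : Fin c) = p.2.2 := fun he => h (key3 hr hr3 p hp he.symm)
        simp [h, this]
    simp only [A, B, C, A', B', C']
    ring
  · rintro ⟨y, hy⟩ ⟨z, hz⟩ ⟨⟨q, hq, hq1, hq2⟩, ⟨r, hr, hr1, hr3⟩⟩
    have hne : ((r.1, q.2.1, z) : Question a b c) ≠ (q.1, y, r.2.2) := by
      intro h
      exact hy q hq (congrArg (fun t : Question a b c => t.2.1) h)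
    obtain ⟨p, hp, hgp⟩ := hQ _ _ hne
    apply hgp
    simp only [g]
    have A : ((if (r.1 : Fin a) = p.1 then 1 else 0) : ℕ) = if p = r then 1 else 0 := by
      by_cases h : p = r
      · simp [h]
      · have : ¬ (r.1 : Fin a) = p.1 := fun he => h (key1 hr hr1 p hp he.symm)
        simp [h, this]
    have B : ((if (q.2.1 : Fin b) = p.2.1 then 1 else 0) : ℕ) = if p = q then 1 else 0 := by
      by_cases h : p = q
      · simp [h]
      · have : ¬ (q.2.1 : Fin b) = p.2.1 := fun he => h (key2 hq hq2 p hp he.symm)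
        simp [h, this]
    have C : ((if (z : Fin c) = p.2.2 then 1 else 0) : ℕ) = 0 := by
      have : ¬ (z : Fin c) = p.2.2 := fun he => hz p hp he.symm
      simp [this]
    have A' : ((if (q.1 : Fin a) = p.1 then 1 else 0) : ℕ) = if p = q then 1 else 0 := by
      by_cases h : p = q
      · simp [h]
      · have : ¬ (q.1 : Fin a) = p.1 := fun he => h (key1 hq hq1 p hp he.symm)
        simp [h, this]
    have B' : ((if (y : Fin b) = p.2.1 then 1 else 0) : ℕ) = 0 := by
      have : ¬ (y : Fin b) = p.2.1 := fun he => hy p hp he.symm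
      simp [this]
    have C' : ((if (r.2.2 : Fin c) = p.2.2 then 1 else 0) : ℕ) = if p = r then 1 else 0 := by
      by_cases h : p = r
      · simp [h]
      · have : ¬ (r.2.2 : Fin c) = p.2.2 := fun he => h (key3 hr hr3 p hp he.symm)
        simp [h, this]
    simp only [A, B, C, A', B', C']
    ring
end

section
/- Let Q be a feasible strategy for (a,b,c)-Mastermind. If Q contains two double-neighboring (2,2,1)-questions (two distinct (2,2,1)-questions agreeing in exactly two coordinates), then Q contains no (1,1,⋆)-question, and moreover on at least one of the first two pegs every color occurs in some question of Q. -/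
theorem double_neighboring_221_questions (a b c : ℕ) (ha : 0 < a) (hb : 0 < b)
    (hc : 0 < c) (Q : Finset (Question a b c)) (hQ : Feasible Q)
    (hdn : ∃ q ∈ Q, ∃ q' ∈ Q,
      (cnt1 Q q = 2 ∧ cnt2 Q q = 2 ∧ cnt3 Q q = 1) ∧
      (cnt1 Q q' = 2 ∧ cnt2 Q q' = 2 ∧ cnt3 Q q' = 1) ∧
      q ≠ q' ∧ g q q' = 2) :
    (¬∃ q ∈ Q, cnt1 Q q = 1 ∧ cnt2 Q q = 1) ∧
    ((∀ x : Fin a, ∃ q ∈ Q, q.1 = x) ∨ (∀ y : Fin b, ∃ q ∈ Q, q.2.1 = y)) := by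
  obtain ⟨q, hq, q', hq', ⟨hq1, hq2, hq3⟩, ⟨hq'1, hq'2, hq'3⟩, hne, hg⟩ := hdn
  -- third coordinates differ
  have h3ne : q.2.2 ≠ q'.2.2 := by
    intro h
    have hsub : ({q, q'} : Finset (Question a b c)) ⊆
        Q.filter (fun p => p.2.2 = q.2.2) := by
      intro p hp
      simp only [Finset.mem_insert, Finset.mem_singleton] at hp
      rcases hp with rfl | rfl
      · exact Finset.mem_filter.mpr ⟨hq, rfl⟩
      · exact Finset.mem_filter.mpr ⟨hq', h.symm⟩
    have hcard := Finset.card_le_card hsub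
    rw [Finset.card_insert_of_notMem (by simpa using hne),
      Finset.card_singleton] at hcard
    unfold cnt3 at hq3
    omega
  -- they agree in the first two coordinates
  have heq1 : q.1 = q'.1 ∧ q.2.1 = q'.2.1 := by
    simp only [g] at hg
    split_ifs at hg <;>
      first
        | exact ⟨by assumption, by assumption⟩
        | omega
        | exact absurd ‹q.2.2 = q'.2.2› h3ne
  -- the filter on the first coordinate is exactly {q, q'}
  have hfil1 : Q.filter (fun p => p.1 = q.1) = {q, q'} := by
    symm
    apply Finset.eq_of_subset_of_card_le
    · intro p hp
      simp only [Finset.mem_insert, Finset.mem_singleton] at hp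
      rcases hp with rfl | rfl
      · exact Finset.mem_filter.mpr ⟨hq, rfl⟩
      · exact Finset.mem_filter.mpr ⟨hq', heq1.1.symm⟩
    · unfold cnt1 at hq1
      rw [hq1, Finset.card_insert_of_notMem (by simpa using hne),
        Finset.card_singleton]
  have hfil2 : Q.filter (fun p => p.2.1 = q.2.1) = {q, q'} := by
    symm
    apply Finset.eq_of_subset_of_card_le
    · intro p hp
      simp only [Finset.mem_insert, Finset.mem_singleton] at hp
      rcases hp with rfl | rfl
      · exact Finset.mem_filter.mpr ⟨hq, rfl⟩
      · exact Finset.mem_filter.mpr ⟨hq', heq1.2.symm⟩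
    · unfold cnt2 at hq2
      rw [hq2, Finset.card_insert_of_notMem (by simpa using hne),
        Finset.card_singleton]
  have key1 : ∀ p ∈ Q, (p.1 = q.1 ↔ p = q ∨ p = q') := by
    intro p hp
    constructor
    · intro h
      have hm : p ∈ Q.filter (fun p => p.1 = q.1) := Finset.mem_filter.mpr ⟨hp, h⟩
      rw [hfil1] at hm
      simpa using hm
    · rintro (rfl | rfl)
      · rfl
      · exact heq1.1.symm
  have key2 : ∀ p ∈ Q, (p.2.1 = q.2.1 ↔ p = q ∨ p = q') := by
    intro p hp
    constructor
    · intro h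
      have hm : p ∈ Q.filter (fun p => p.2.1 = q.2.1) := Finset.mem_filter.mpr ⟨hp, h⟩
      rw [hfil2] at hm
      simpa using hm
    · rintro (rfl | rfl)
      · rfl
      · exact heq1.2.symm
  constructor
  · -- no (1,1,⋆)-question
    rintro ⟨r, hr, hr1, hr2⟩
    -- r differs from q in the first two coordinates
    have hr1q : r.1 ≠ q.1 := by
      intro h
      rcases (key1 r hr).mp h with rfl | rfl
      · unfold cnt1 at hr1 hq1; omega
      · unfold cnt1 at hr1 hq'1; omega
    have hr2q : r.2.1 ≠ q.2.1 := by
      intro h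
      rcases (key2 r hr).mp h with rfl | rfl
      · unfold cnt2 at hr2 hq2; omega
      · unfold cnt2 at hr2 hq'2; omega
    -- the filter on r's coordinates is exactly {r}
    have hfr1 : Q.filter (fun p => p.1 = r.1) = {r} := by
      symm
      apply Finset.eq_of_subset_of_card_le
      · intro p hp
        simp only [Finset.mem_singleton] at hp
        subst hp
        exact Finset.mem_filter.mpr ⟨hr, rfl⟩
      · unfold cnt1 at hr1
        rw [hr1, Finset.card_singleton]
    have hfr2 : Q.filter (fun p => p.2.1 = r.2.1) = {r} := by
      symm
      apply Finset.eq_of_subset_of_card_le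
      · intro p hp
        simp only [Finset.mem_singleton] at hp
        subst hp
        exact Finset.mem_filter.mpr ⟨hr, rfl⟩
      · unfold cnt2 at hr2
        rw [hr2, Finset.card_singleton]
    have keyr1 : ∀ p ∈ Q, (p.1 = r.1 ↔ p = r) := by
      intro p hp
      constructor
      · intro h
        have hm : p ∈ Q.filter (fun p => p.1 = r.1) := Finset.mem_filter.mpr ⟨hp, h⟩
        rw [hfr1] at hm
        simpa using hm
      · rintro rfl; rfl
    have keyr2 : ∀ p ∈ Q, (p.2.1 = r.2.1 ↔ p = r) := by
      intro p hp
      constructor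
      · intro h
        have hm : p ∈ Q.filter (fun p => p.2.1 = r.2.1) := Finset.mem_filter.mpr ⟨hp, h⟩
        rw [hfr2] at hm
        simpa using hm
      · rintro rfl; rfl
    -- two indistinguishable secrets
    obtain ⟨p, hp, hgp⟩ := hQ (r.1, (q.2.1, q.2.2)) (q.1, (r.2.1, q.2.2))
      (by intro h; exact hr1q (Prod.ext_iff.mp h).1)
    apply hgp
    have e1 : (q.1 = p.1) ↔ (q.2.1 = p.2.1) :=
      eq_comm.trans ((key1 p hp).trans ((key2 p hp).symm.trans eq_comm))
    have e2 : (r.1 = p.1) ↔ (r.2.1 = p.2.1) :=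
      eq_comm.trans ((keyr1 p hp).trans ((keyr2 p hp).symm.trans eq_comm))
    simp only [g, e1, e2]
    ring
  · -- every color occurs on peg 1 or peg 2
    by_contra hcon
    push_neg at hcon
    obtain ⟨⟨x, hx⟩, ⟨y, hy⟩⟩ := hcon
    obtain ⟨p, hp, hgp⟩ := hQ (x, (q.2.1, q.2.2)) (q.1, (y, q.2.2))
      (by intro h; exact hx q hq (Prod.ext_iff.mp h).1.symm)
    apply hgp
    have e1 : (q.1 = p.1) ↔ (q.2.1 = p.2.1) :=
      eq_comm.trans ((key1 p hp).trans ((key2 p hp).symm.trans eq_comm))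
    have hxp : ¬ (x = p.1) := fun h => hx p hp h.symm
    have hyp : ¬ (y = p.2.1) := fun h => hy p hp h.symm
    simp only [g, e1, if_neg hxp, if_neg hyp]
    ring
end

section
/- Let Q be a feasible strategy for (a,b,c)-Mastermind. Suppose QW contains three distinct questions q, q', q'' such that q is a (2,2,1)-question, q' is a (2,⋆,1)-question with the same first coordinate as q, and q'' is a (⋆,2,1)-question with the same second coordinate as q. Then Q contains no (1,1,⋆)-question, and on at least one of the first two pegs every color occurs in some question of Q. -/
lemma mem_pair_of_card_two {α : Type*} {s : Finset α} {p p' r : α}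
    (h : s.card = 2) (hp : p ∈ s) (hp' : p' ∈ s) (hne : p ≠ p') (hr : r ∈ s) :
    r = p ∨ r = p' := by
  classical
  have hsub : ({p, p'} : Finset α) ⊆ s := by
    intro z hz
    rcases Finset.mem_insert.1 hz with h1 | h1
    · exact h1 ▸ hp
    · rw [Finset.mem_singleton] at h1; exact h1 ▸ hp'
  have heq : ({p, p'} : Finset α) = s :=
    Finset.eq_of_subset_of_card_le hsub (by rw [h, Finset.card_pair hne])
  rw [← heq] at hr
  simpa using hr

lemma eq_of_card_one {α : Type*} {s : Finset α} {p r : α}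
    (h : s.card = 1) (hp : p ∈ s) (hr : r ∈ s) : r = p := by
  obtain ⟨z, hz⟩ := Finset.card_eq_one.1 h
  rw [hz, Finset.mem_singleton] at hp hr
  rw [hp, hr]

lemma key_contra {a b c : ℕ} {Q : Finset (Question a b c)} (hQ : Feasible Q)
    {q q' q'' : Question a b c} (hq : q ∈ Q) (hq' : q' ∈ Q) (hq'' : q'' ∈ Q)
    (F1 : ∀ r ∈ Q, r.1 = q.1 → r = q ∨ r = q')
    (F2 : ∀ r ∈ Q, r.2.1 = q.2.1 → r = q ∨ r = q'')
    (F3 : ∀ r ∈ Q, r.2.2 = q.2.2 → r = q)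
    (F3' : ∀ r ∈ Q, r.2.2 = q'.2.2 → r = q')
    (F3'' : ∀ r ∈ Q, r.2.2 = q''.2.2 → r = q'')
    (hqq' : q ≠ q') (hqq'' : q ≠ q'') (hq'q'' : q' ≠ q'')
    (h1' : q'.1 = q.1) (h2'' : q''.2.1 = q.2.1)
    {x : Fin a} {y : Fin b}
    (hxq : x ≠ q.1) (hxq'' : x ≠ q''.1)
    (hyq : y ≠ q.2.1) (hyq' : y ≠ q'.2.1)
    (hx : ∀ r ∈ Q, r.1 = x → r.2.1 = y ∧ r.2.2 ≠ q'.2.2 ∧ r.2.2 ≠ q''.2.2)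
    (hy : ∀ r ∈ Q, r.2.1 = y → r.1 = x) : False := by
  have hC''q : q''.2.2 ≠ q.2.2 := fun h => hqq'' (F3 q'' hq'' h).symm
  have hC'q : q'.2.2 ≠ q.2.2 := fun h => hqq' (F3 q' hq' h).symm
  have hC''C' : q''.2.2 ≠ q'.2.2 := fun h => hq'q'' (F3' q'' hq'' h).symm
  have hC'C'' : q'.2.2 ≠ q''.2.2 := fun h => hq'q'' (F3'' q' hq' h)
  have hB' : q'.2.1 ≠ q.2.1 := by
    intro h
    rcases F2 q' hq' h with e | e
    · exact hqq' e.symm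
    · exact hq'q'' e
  have hA'' : q''.1 ≠ q.1 := by
    intro h
    rcases F1 q'' hq'' h with e | e
    · exact hqq'' e.symm
    · exact hq'q'' e.symm
  obtain ⟨r, hr, hgr⟩ := hQ (q.1, y, q''.2.2) (x, q.2.1, q'.2.2)
    (fun h => hxq (congrArg Prod.fst h).symm)
  apply hgr
  by_cases e1 : r = q
  · subst e1; simp [g, hyq, hC''q, hxq, hC'q]
  by_cases e2 : r = q'
  · subst e2; simp [g, h1', hxq, hyq', hC''C', Ne.symm hB']
  by_cases e3 : r = q''
  · subst e3; simp [g, h2'', Ne.symm hA'', hyq, hxq'', hC'C'']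
  have hr1 : q.1 ≠ r.1 := by
    intro h
    rcases F1 r hr h.symm with e | e
    · exact e1 e
    · exact e2 e
  have hr2 : q.2.1 ≠ r.2.1 := by
    intro h
    rcases F2 r hr h.symm with e | e
    · exact e1 e
    · exact e3 e
  have hr3' : q'.2.2 ≠ r.2.2 := fun h => e2 (F3' r hr h.symm)
  have hr3'' : q''.2.2 ≠ r.2.2 := fun h => e3 (F3'' r hr h.symm)
  by_cases hxr : r.1 = x
  · obtain ⟨hy1, -, -⟩ := hx r hr hxr
    simp [g, hr1, hxr, hy1, Ne.symm hyq, Ne.symm hxq, hr3', hr3'']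
  · have hyr : r.2.1 ≠ y := fun h => hxr (hy r hr h)
    simp [g, hr1, hr2, Ne.symm hyr, Ne.symm hxr, hr3', hr3'']

theorem neighboring_221_triple (a b c : ℕ) (ha : 0 < a) (hb : 0 < b)
    (hc : 0 < c) (Q : Finset (Question a b c)) (hQ : Feasible Q)
    (htriple : ∃ q ∈ Q, ∃ q' ∈ Q, ∃ q'' ∈ Q,
      q ≠ q' ∧ q ≠ q'' ∧ q' ≠ q'' ∧
      (cnt1 Q q = 2 ∧ cnt2 Q q = 2 ∧ cnt3 Q q = 1) ∧
      (cnt1 Q q' = 2 ∧ cnt3 Q q' = 1 ∧ q'.1 = q.1) ∧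
      (cnt2 Q q'' = 2 ∧ cnt3 Q q'' = 1 ∧ q''.2.1 = q.2.1)) :
    (¬∃ q ∈ Q, cnt1 Q q = 1 ∧ cnt2 Q q = 1) ∧
    ((∀ x : Fin a, ∃ q ∈ Q, q.1 = x) ∨ (∀ y : Fin b, ∃ q ∈ Q, q.2.1 = y)) := by

  classical
  obtain ⟨q, hq, q', hq', q'', hq'', hqq', hqq'', hq'q'',
    ⟨hc1q, hc2q, hc3q⟩, ⟨hc1q', hc3q', h1'⟩, ⟨hc2q'', hc3q'', h2''⟩⟩ := htriple
  -- structure facts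
  have F1 : ∀ r ∈ Q, r.1 = q.1 → r = q ∨ r = q' := by
    intro r hr h
    exact mem_pair_of_card_two hc1q (Finset.mem_filter.2 ⟨hq, rfl⟩)
      (Finset.mem_filter.2 ⟨hq', h1'⟩) hqq' (Finset.mem_filter.2 ⟨hr, h⟩)
  have F2 : ∀ r ∈ Q, r.2.1 = q.2.1 → r = q ∨ r = q'' := by
    intro r hr h
    exact mem_pair_of_card_two hc2q (Finset.mem_filter.2 ⟨hq, rfl⟩)
      (Finset.mem_filter.2 ⟨hq'', h2''⟩) hqq'' (Finset.mem_filter.2 ⟨hr, h⟩)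
  have F3 : ∀ r ∈ Q, r.2.2 = q.2.2 → r = q := fun r hr h =>
    eq_of_card_one hc3q (Finset.mem_filter.2 ⟨hq, rfl⟩) (Finset.mem_filter.2 ⟨hr, h⟩)
  have F3' : ∀ r ∈ Q, r.2.2 = q'.2.2 → r = q' := fun r hr h =>
    eq_of_card_one hc3q' (Finset.mem_filter.2 ⟨hq', rfl⟩) (Finset.mem_filter.2 ⟨hr, h⟩)
  have F3'' : ∀ r ∈ Q, r.2.2 = q''.2.2 → r = q'' := fun r hr h =>
    eq_of_card_one hc3q'' (Finset.mem_filter.2 ⟨hq'', rfl⟩) (Finset.mem_filter.2 ⟨hr, h⟩)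
  constructor
  · rintro ⟨p, hp, hp1, hp2⟩
    have G1 : ∀ r ∈ Q, r.1 = p.1 → r = p := fun r hr h =>
      eq_of_card_one hp1 (Finset.mem_filter.2 ⟨hp, rfl⟩) (Finset.mem_filter.2 ⟨hr, h⟩)
    have G2 : ∀ r ∈ Q, r.2.1 = p.2.1 → r = p := fun r hr h =>
      eq_of_card_one hp2 (Finset.mem_filter.2 ⟨hp, rfl⟩) (Finset.mem_filter.2 ⟨hr, h⟩)
    have hpq : p ≠ q := by
      intro h; rw [h] at hp1; rw [hp1] at hc1q; exact absurd hc1q (by norm_num)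
    have hpq' : p ≠ q' := by
      intro h; rw [h] at hp1; rw [hp1] at hc1q'; exact absurd hc1q' (by norm_num)
    have hpq'' : p ≠ q'' := by
      intro h; rw [h] at hp2; rw [hp2] at hc2q''; exact absurd hc2q'' (by norm_num)
    apply key_contra hQ hq hq' hq'' F1 F2 F3 F3' F3'' hqq' hqq'' hq'q'' h1' h2''
      (x := p.1) (y := p.2.1)
    · intro h; exact hpq (G1 q hq h.symm).symm
    · intro h; exact hpq'' (G1 q'' hq'' h.symm).symm
    · intro h; exact hpq (G2 q hq h.symm).symm
    · intro h; exact hpq' (G2 q' hq' h.symm).symm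
    · intro r hr h
      rw [G1 r hr h]
      exact ⟨rfl, fun h2 => hpq' (F3' p hp h2), fun h2 => hpq'' (F3'' p hp h2)⟩
    · intro r hr h
      have := G2 r hr h
      rw [this]
  · by_contra hcon
    push_neg at hcon
    obtain ⟨⟨x, hxnone⟩, ⟨y, hynone⟩⟩ := hcon
    apply key_contra hQ hq hq' hq'' F1 F2 F3 F3' F3'' hqq' hqq'' hq'q'' h1' h2''
      (x := x) (y := y)
    · exact fun h => hxnone q hq h.symm
    · exact fun h => hxnone q'' hq'' h.symm
    · exact fun h => hynone q hq h.symm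
    · exact fun h => hynone q' hq' h.symm
    · exact fun r hr h => absurd h (hxnone r hr)
    · exact fun r hr h => absurd h (hynone r hr)
end
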